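/- arXiv:1703.04867 — 4 statements merged into one kernel-verified Lean document; each statement's English description precedes it below -/
import Mathlib

section
/- For all integers m, n ≥ 2, the number D^{(m,n)} of knot (m,n)-mosaics satisfies D^{(m,n)} = 2·‖(X_{m−2} + O_{m−2})^{n−2}‖, where ‖N‖ denotes the sum of all entries of the matrix N. -/
/-- Connection point on the left edge, for each of the eleven mosaic tiles `T_0, …, T_10`. -/
def cpL : Fin 11 → Bool := ![false, true, false, false, true, true, false, true, true, true, true]
/-- Connection point on the right edge. -/
def cpR : Fin 11 → Bool := ![false, false, true, true, false, true, false, true, true, true, true]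
/-- Connection point on the top edge. -/
def cpT : Fin 11 → Bool := ![false, false, false, true, true, false, true, true, true, true, true]
/-- Connection point on the bottom edge. -/
def cpB : Fin 11 → Bool := ![false, true, true, false, false, false, true, true, true, true, true]

/-- An `(m,n)`-mosaic: an `m × n` matrix of mosaic tiles (row `i`, column `j`). -/
abbrev Mosaic (m n : ℕ) := Fin m → Fin n → Fin 11

/-- Suitably connected: contiguous tiles agree about connection points on their common edge. -/
def SuitablyConnected {m n : ℕ} (M : Mosaic m n) : Prop :=
  (∀ (i : Fin m) (j : Fin n) (h : j.val + 1 < n),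
      cpR (M i j) = cpL (M i ⟨j.val + 1, h⟩)) ∧
  (∀ (i : Fin m) (h : i.val + 1 < m) (j : Fin n),
      cpB (M i j) = cpT (M ⟨i.val + 1, h⟩ j))

/-- Suitably ∂-connected: tiles on opposite ends of a row (resp. column) agree about
connection points on the outer boundary edges. -/
def SuitablyBdryConnected {m n : ℕ} (M : Mosaic m n) : Prop :=
  (∀ (i : Fin m) (j j' : Fin n), j.val = 0 → j'.val = n - 1 →
      cpL (M i j) = cpR (M i j')) ∧
  (∀ (i i' : Fin m) (j : Fin n), i.val = 0 → i'.val = m - 1 →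
      cpT (M i j) = cpB (M i' j))

/-- A period knot `(m,n)`-mosaic. -/
def PeriodKnot {m n : ℕ} (M : Mosaic m n) : Prop :=
  SuitablyConnected M ∧ SuitablyBdryConnected M

/-- `D_P^{(m,n)}`, the number of period knot `(m,n)`-mosaics. -/
noncomputable def DP (m n : ℕ) : ℕ := Nat.card {M : Mosaic m n // PeriodKnot M}

/-- No connection points on the boundary of the mosaic. -/
def BoundaryFree {m n : ℕ} (M : Mosaic m n) : Prop :=
  ∀ (i : Fin m) (j : Fin n),
    (j.val = 0 → cpL (M i j) = false) ∧ (j.val = n - 1 → cpR (M i j) = false) ∧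
    (i.val = 0 → cpT (M i j) = false) ∧ (i.val = m - 1 → cpB (M i j) = false)

/-- `D^{(m,n)}`, the number of knot `(m,n)`-mosaics. -/
noncomputable def DK (m n : ℕ) : ℕ :=
  Nat.card {M : Mosaic m n // SuitablyConnected M ∧ BoundaryFree M}

/-- Subtract `x` from the index `i`, modulo `m`. -/
def shiftIdx {m : ℕ} (x : ℤ) (i : Fin m) : Fin m :=
  ⟨(((i : ℤ) - x) % (m : ℤ)).toNat, by
    have hm : (0 : ℤ) < (m : ℤ) := by exact_mod_cast i.pos
    have h1 := Int.emod_lt_of_pos ((i : ℤ) - x) hm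
    have h2 := Int.emod_nonneg ((i : ℤ) - x) (by omega : (m : ℤ) ≠ 0)
    omega⟩

/-- The cyclic rotation `t_{x,y}`: `(t_{x,y} M)_{i,j} = M_{i-x, j-y}` (indices mod `m`, `n`). -/
def tshift {m n : ℕ} (x y : ℤ) (M : Mosaic m n) : Mosaic m n :=
  fun i j => M (shiftIdx x i) (shiftIdx y j)

/-- `M` is a `(p,q)`-f.period mosaic: `p` is the least positive integer with `M = t_{p,0}(M)`
and `q` is the least positive integer with `M = t_{0,q}(M)`. -/
def IsFPeriod {m n : ℕ} (p q : ℕ) (M : Mosaic m n) : Prop :=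
  IsLeast {a : ℕ | 0 < a ∧ M = tshift (a : ℤ) 0 M} p ∧
  IsLeast {b : ℕ | 0 < b ∧ M = tshift 0 (b : ℤ) M} q

/-- `d_{p,q}`: the number of `(p,q)`-f.period knot `(m,n)`-mosaics. -/
noncomputable def dFP (m n p q : ℕ) : ℕ :=
  Nat.card {M : Mosaic m n // PeriodKnot M ∧ IsFPeriod p q M}

/-- Equivalence of period knot mosaics under cyclic rotations of rows and columns. -/
def torRel (m n : ℕ) (A B : {M : Mosaic m n // PeriodKnot M}) : Prop :=
  ∃ x y : ℤ, tshift x y A.val = B.val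

/-- `D_T^{(m,n)}`, the number of toroidal knot `(m,n)`-mosaics. -/
noncomputable def DT (m n : ℕ) : ℕ := Nat.card (Quot (torRel m n))

/-- `M` is a `p_{(k,1)}`-f.period knot `(p,p)`-mosaic: not `(1,1)`-f.period and `M = t_{k,1}(M)`. -/
def IsPk1FPeriod {p : ℕ} (k : ℕ) (M : Mosaic p p) : Prop :=
  ¬ IsFPeriod 1 1 M ∧ M = tshift (k : ℤ) 1 M

/-- `d_{p_{(k,1)}}`: the number of `p_{(k,1)}`-f.period knot `(p,p)`-mosaics. -/
noncomputable def dPk (p k : ℕ) : ℕ :=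
  Nat.card {M : Mosaic p p // PeriodKnot M ∧ IsPk1FPeriod k M}

/-- `d_{p²}`: the number of period knot `(p,p)`-mosaics that are not `(1,1)`-, not `(1,p)`-
and not `p_{(k,1)}`-f.period for any `k`. -/
noncomputable def dPsq (p : ℕ) : ℕ :=
  Nat.card {M : Mosaic p p // PeriodKnot M ∧ ¬ IsFPeriod 1 1 M ∧ ¬ IsFPeriod 1 p M ∧
    ∀ k < p, ¬ IsPk1FPeriod k M}

/-- Entries of the pair `(X_k, O_k)` of `2^k × 2^k` matrices defined by the block recursion
`X_{k+1} = [[X_k, O_k], [O_k, X_k]]`, `O_{k+1} = [[O_k, X_k], [X_k, 4 O_k]]`,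
seeded with `X_0 = O_0 = [1]` (the most significant bit selects the block). -/
def matsXO : ℕ → ℕ → ℕ → ℕ × ℕ
  | 0, _, _ => (1, 1)
  | k + 1, i, j =>
    let v := matsXO k (i % 2 ^ k) (j % 2 ^ k)
    if i / 2 ^ k % 2 = 0 then
      if j / 2 ^ k % 2 = 0 then (v.1, v.2) else (v.2, v.1)
    else
      if j / 2 ^ k % 2 = 0 then (v.2, v.1) else (v.1, 4 * v.2)

/-- The matrix `X_k`. -/
def Xmat (m : ℕ) : Matrix (Fin (2 ^ m)) (Fin (2 ^ m)) ℕ :=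
  Matrix.of fun i j => (matsXO m i j).1

/-- The matrix `O_k`. -/
def Omat (m : ℕ) : Matrix (Fin (2 ^ m)) (Fin (2 ^ m)) ℕ :=
  Matrix.of fun i j => (matsXO m i j).2

/-- Entries of the quadruple `(X_k^+, X_k^-, O_k^+, O_k^-)` of `2^k × 2^k` matrices defined by
the block recursions `X_{k+1}^+ = [[X_k^+, O_k^-],[O_k^-, X_k^+]]`,
`X_{k+1}^- = [[X_k^-, O_k^+],[O_k^+, X_k^-]]`, `O_{k+1}^+ = [[O_k^+, X_k^-],[X_k^-, 4 O_k^+]]`,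
`O_{k+1}^- = [[O_k^-, X_k^+],[X_k^+, 4 O_k^-]]`, seeded with `X_0^+ = O_0^+ = [1]`,
`X_0^- = O_0^- = [0]` (the most significant bit selects the block). -/
def matsPM : ℕ → ℕ → ℕ → ℕ × ℕ × ℕ × ℕ
  | 0, _, _ => (1, 0, 1, 0)
  | k + 1, i, j =>
    let v := matsPM k (i % 2 ^ k) (j % 2 ^ k)
    match v with
    | (xp, xm, op, om) =>
      if i / 2 ^ k % 2 = 0 then
        if j / 2 ^ k % 2 = 0 then (xp, xm, op, om) else (om, op, xm, xp)
      else
        if j / 2 ^ k % 2 = 0 then (om, op, xm, xp) else (xp, xm, 4 * op, 4 * om)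

/-- The matrix `X_m^+`. -/
def Xplus (m : ℕ) : Matrix (Fin (2 ^ m)) (Fin (2 ^ m)) ℕ :=
  Matrix.of fun i j => (matsPM m i j).1
/-- The matrix `X_m^-`. -/
def Xminus (m : ℕ) : Matrix (Fin (2 ^ m)) (Fin (2 ^ m)) ℕ :=
  Matrix.of fun i j => (matsPM m i j).2.1
/-- The matrix `O_m^+`. -/
def Oplus (m : ℕ) : Matrix (Fin (2 ^ m)) (Fin (2 ^ m)) ℕ :=
  Matrix.of fun i j => (matsPM m i j).2.2.1
/-- The matrix `O_m^-`. -/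
def Ominus (m : ℕ) : Matrix (Fin (2 ^ m)) (Fin (2 ^ m)) ℕ :=
  Matrix.of fun i j => (matsPM m i j).2.2.2

/-- The boundary state (a word in `{o,x}^m`) encoded by `a : Fin (2^m)` in reverse
lexicographic order: the first position is the least significant bit. -/
def stateOf {m : ℕ} (a : Fin (2 ^ m)) : Fin m → Bool := fun r => (a : ℕ).testBit r.val

/-- The `l`-state of a mosaic. -/
def lState {m n : ℕ} (hn : 0 < n) (M : Mosaic m n) : Fin m → Bool :=
  fun i => cpL (M i ⟨0, hn⟩)
/-- The `r`-state of a mosaic. -/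
def rState {m n : ℕ} (hn : 0 < n) (M : Mosaic m n) : Fin m → Bool :=
  fun i => cpR (M i ⟨n - 1, Nat.sub_lt hn Nat.one_pos⟩)
/-- The `t`-state of a mosaic. -/
def tState {m n : ℕ} (hm : 0 < m) (M : Mosaic m n) : Fin n → Bool :=
  fun j => cpT (M ⟨0, hm⟩ j)
/-- The `b`-state of a mosaic. -/
def bState {m n : ℕ} (hm : 0 < m) (M : Mosaic m n) : Fin n → Bool :=
  fun j => cpB (M ⟨m - 1, Nat.sub_lt hm Nat.one_pos⟩ j)

/-- The state matrix `N^{(m,n)+}`: its `(a,b)` entry counts the suitably connected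
`(m,n)`-mosaics whose `t`-state equals its `b`-state, whose `l`-state is the `a`-th state
and whose `r`-state is the `b`-th state. -/
noncomputable def Nplus (m n : ℕ) (hm : 0 < m) (hn : 0 < n) :
    Matrix (Fin (2 ^ m)) (Fin (2 ^ m)) ℕ :=
  Matrix.of fun a b => Nat.card {M : Mosaic m n // SuitablyConnected M ∧
    tState hm M = bState hm M ∧ lState hn M = stateOf a ∧ rState hn M = stateOf b}

/-- The index map `α` for `tr^{(k)}`: cyclic shift by `k` positions of the `p`-bit binary
representation, i.e. `α(i) ≡ 2^k i (mod 2^p - 1)` for `0 < i < 2^p - 1`, `α(0) = 0`,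
`α(2^p-1) = 2^p-1`. -/
def alphaIdx (p k : ℕ) (i : Fin (2 ^ p)) : Fin (2 ^ p) :=
  if h : (i : ℕ) = 2 ^ p - 1 then i
  else ⟨(2 ^ k * (i : ℕ)) % (2 ^ p - 1), by
    have h1 : 0 < 2 ^ p := Nat.two_pow_pos p
    have h2 : (i : ℕ) < 2 ^ p := i.isLt
    have h3 : 0 < 2 ^ p - 1 := by omega
    have h4 := Nat.mod_lt (2 ^ k * (i : ℕ)) h3
    omega⟩

/-- The twisted trace `tr^{(k)}(A) = Σ_i A_{i+1, α(i)+1}`. -/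
def trk (p k : ℕ) (A : Matrix (Fin (2 ^ p)) (Fin (2 ^ p)) ℕ) : ℕ :=
  ∑ i, A i (alphaIdx p k i)

namespace KM

def f4 (a b h : Bool) : ℕ := if a && b && h then 4 else 1

def par : ℕ → ℕ → Bool
  | 0, _ => false
  | k+1, x => xor (par k x) (x.testBit k)

def colProd : ℕ → ℕ → ℕ → Bool → ℕ
  | 0, _, _, _ => 1
  | k+1, a, b, c =>
      f4 (a.testBit k) (b.testBit k) (xor c (xor (a.testBit k) (b.testBit k))) *
        colProd k a b (xor c (xor (a.testBit k) (b.testBit k)))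

lemma par_mod (k x : ℕ) : par k (x % 2 ^ k) = par k x := by
  induction k with
  | zero => rfl
  | succ k ih =>
    have h1 : ∀ y j, j < k + 1 → (y % 2 ^ (k+1)).testBit j = y.testBit j := by
      intro y j hj; simp [Nat.testBit_mod_two_pow, hj]
    have hpar : ∀ y z : ℕ, (∀ j, j < k → y.testBit j = z.testBit j) → par k y = par k z := by
      clear ih h1
      induction k with
      | zero => intros; rfl
      | succ k ih' =>
        intro y z h
        simp only [par, ih' y z (fun j hj => h j (by omega)), h k (by omega)]
    simp only [par]
    rw [hpar _ _ (fun j hj => h1 x j (by omega)), h1 x k (by omega)]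

lemma par_congr (k : ℕ) {y z : ℕ} (h : ∀ j, j < k → y.testBit j = z.testBit j) :
    par k y = par k z := by
  induction k with
  | zero => rfl
  | succ k ih => simp only [par, ih (fun j hj => h j (by omega)), h k (by omega)]

lemma par_xor (k a b : ℕ) : par k (a ^^^ b) = xor (par k a) (par k b) := by
  induction k with
  | zero => rfl
  | succ k ih =>
    simp only [par, ih, Nat.testBit_xor]
    cases par k a <;> cases par k b <;> cases a.testBit k <;> cases b.testBit k <;> rfl

lemma par_lsb (k x : ℕ) : par (k+1) x = xor (x.testBit 0) (par k (x / 2)) := by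
  induction k generalizing x with
  | zero => simp [par]
  | succ k ih =>
    have : par (k+2) x = xor (par (k+1) x) (x.testBit (k+1)) := rfl
    rw [this, ih]
    show _ = xor (x.testBit 0) (xor (par k (x/2)) ((x/2).testBit k))
    rw [Nat.testBit_div_two x k]
    cases x.testBit 0 <;> cases par k (x/2) <;> cases x.testBit (k+1) <;> rfl

lemma colProd_congr : ∀ (k : ℕ) {a b a' b' : ℕ} (c : Bool),
    (∀ j, j < k → a.testBit j = a'.testBit j) →
    (∀ j, j < k → b.testBit j = b'.testBit j) →
    colProd k a b c = colProd k a' b' c := by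
  intro k
  induction k with
  | zero => intros; rfl
  | succ k ih =>
    intro a b a' b' c ha hb
    simp only [colProd, ha k (by omega), hb k (by omega)]
    rw [ih _ (fun j hj => ha j (by omega)) (fun j hj => hb j (by omega))]

lemma colProd_mod (k a b : ℕ) (c : Bool) :
    colProd k (a % 2 ^ k) (b % 2 ^ k) c = colProd k a b c := by
  refine colProd_congr k c ?_ ?_ <;> intro j hj <;> simp [Nat.testBit_mod_two_pow, hj]

lemma testBit_eq_decide (x i : ℕ) : x.testBit i = decide (x / 2 ^ i % 2 = 1) :=
  Nat.testBit_eq_decide_div_mod_eq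

lemma matsXO_eq (k a b : ℕ) :
    matsXO k a b = (colProd k a b false, colProd k a b true) := by
  induction k generalizing a b with
  | zero => rfl
  | succ k ih =>
    have hmod := colProd_mod k a b
    simp only [matsXO, ih]
    have ha : a / 2 ^ k % 2 = 0 ∨ a / 2 ^ k % 2 = 1 := by omega
    have hb : b / 2 ^ k % 2 = 0 ∨ b / 2 ^ k % 2 = 1 := by omega
    have hta : a.testBit k = decide (a / 2 ^ k % 2 = 1) := testBit_eq_decide a k
    have htb : b.testBit k = decide (b / 2 ^ k % 2 = 1) := testBit_eq_decide b k
    rcases ha with ha | ha <;> rcases hb with hb | hb <;>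
      simp only [ha, hb] at hta htb ⊢ <;>
      simp only [colProd, hta, htb, hmod] <;>
      norm_num [f4]


lemma colProd_zero_left (k b : ℕ) (c : Bool) : colProd k 0 b c = 1 := by
  induction k generalizing c with
  | zero => rfl
  | succ k ih => simp [colProd, f4, ih]

lemma colProd_zero_right (k a : ℕ) (c : Bool) : colProd k a 0 c = 1 := by
  induction k generalizing c with
  | zero => rfl
  | succ k ih => simp [colProd, f4, ih]

lemma colProd_lsb (k a b : ℕ) (c : Bool) :
    colProd (k+1) a b c =
      colProd k (a / 2) (b / 2) c *
        f4 (a.testBit 0) (b.testBit 0) (xor c (par (k+1) (a ^^^ b))) := by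
  induction k generalizing c with
  | zero =>
    show f4 _ _ _ * 1 = 1 * f4 _ _ _
    rw [one_mul, mul_one]
    congr 1
    rw [par_lsb 0 (a ^^^ b), Nat.testBit_xor]
    show xor c (xor (a.testBit 0) (b.testBit 0)) = _
    simp [par]
  | succ k ih =>
    show f4 (a.testBit (k+1)) (b.testBit (k+1)) _ * colProd (k+1) a b _ = _
    rw [ih]
    show f4 (a.testBit (k+1)) (b.testBit (k+1)) _ *
      (colProd k (a/2) (b/2) (xor c (xor (a.testBit (k+1)) (b.testBit (k+1)))) * f4 _ _ _) = _
    have h1 : (a/2).testBit k = a.testBit (k+1) := Nat.testBit_div_two a k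
    have h2 : (b/2).testBit k = b.testBit (k+1) := Nat.testBit_div_two b k
    show _ = colProd (k+1) (a/2) (b/2) c * f4 (a.testBit 0) (b.testBit 0) (xor c (par (k+2) (a^^^b)))
    show _ = f4 ((a/2).testBit k) ((b/2).testBit k)
        (xor c (xor ((a/2).testBit k) ((b/2).testBit k))) *
        colProd k (a/2) (b/2) (xor c (xor ((a/2).testBit k) ((b/2).testBit k))) *
        f4 (a.testBit 0) (b.testBit 0) (xor c (par (k+2) (a^^^b)))
    rw [h1, h2, mul_assoc]
    congr 2
    · congr 1
      have : par (k+2) (a^^^b) = xor (par (k+1) (a^^^b)) ((a^^^b).testBit (k+1)) := rfl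
      rw [this, Nat.testBit_xor]
      cases c <;> cases par (k+1) (a^^^b) <;> cases a.testBit (k+1) <;> cases b.testBit (k+1) <;> rfl

lemma f4_xor (x y : Bool) : f4 x y (xor x y) = 1 := by cases x <;> cases y <;> rfl

lemma f4_false (x y : Bool) : f4 x y false = 1 := by cases x <;> cases y <;> rfl

lemma colProd_split (k l r : ℕ) (hl : par (k+2) l = false) (hr : par (k+2) r = false) :
    colProd (k+2) l r false =
      colProd k (l / 2 % 2 ^ k) (r / 2 % 2 ^ k)
        (xor (l.testBit (k+1)) (r.testBit (k+1))) := by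
  have hx : par (k+2) (l ^^^ r) = false := by rw [par_xor, hl, hr]; rfl
  have hx1 : par (k+1) (l ^^^ r) = xor (l.testBit (k+1)) (r.testBit (k+1)) := by
    have : par (k+2) (l^^^r) = xor (par (k+1) (l^^^r)) ((l^^^r).testBit (k+1)) := rfl
    rw [this, Nat.testBit_xor] at hx
    cases hpp : par (k+1) (l ^^^ r) <;> rw [hpp] at hx <;>
      cases hl1 : l.testBit (k+1) <;> cases hr1 : r.testBit (k+1) <;>
        rw [hl1, hr1] at hx <;> simp_all
  show colProd (k+1+1) l r false = _
  rw [show colProd (k+1+1) l r false =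
    f4 (l.testBit (k+1)) (r.testBit (k+1))
      (xor false (xor (l.testBit (k+1)) (r.testBit (k+1)))) *
      colProd (k+1) l r (xor false (xor (l.testBit (k+1)) (r.testBit (k+1)))) from rfl]
  rw [Bool.false_xor, f4_xor, one_mul, colProd_lsb, hx1]
  rw [show xor (xor (l.testBit (k+1)) (r.testBit (k+1))) (xor (l.testBit (k+1)) (r.testBit (k+1)))
      = false by cases l.testBit (k+1) <;> cases r.testBit (k+1) <;> rfl]
  rw [f4_false, mul_one, colProd_mod]



def rW (k : ℕ) (e : Bool) (b : ℕ) : ℕ :=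
  (cond e 1 0) + 2 * b + cond (xor e (par k b)) (2 ^ (k+1)) 0

lemma rW_lt (k : ℕ) (e : Bool) {b : ℕ} (hb : b < 2 ^ k) : rW k e b < 2 ^ (k+2) := by
  have h1 : (2:ℕ) ^ (k+1) = 2 * 2 ^ k := by ring
  have h2 : (2:ℕ) ^ (k+2) = 4 * 2 ^ k := by ring
  unfold rW; cases e <;> cases xor _ (par k b) <;> simp [h1, h2] <;> omega

lemma rW_div2 (k : ℕ) (e : Bool) (b : ℕ) :
    rW k e b / 2 = b + (cond (xor e (par k b)) 1 0) * 2 ^ k := by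
  have h1 : (2:ℕ) ^ (k+1) = 2 * 2 ^ k := by ring
  unfold rW; cases e <;> cases xor _ (par k b) <;> simp [h1] <;> omega

lemma rW_div2_mod (k : ℕ) (e : Bool) {b : ℕ} (hb : b < 2 ^ k) :
    rW k e b / 2 % 2 ^ k = b := by
  rw [rW_div2]
  cases xor e (par k b)
  · simpa using Nat.mod_eq_of_lt hb
  · simp only [cond_true, one_mul]
    rw [Nat.add_mod_right]
    exact Nat.mod_eq_of_lt hb

lemma rW_div_top (k : ℕ) (e : Bool) {b : ℕ} (hb : b < 2 ^ k) :
    rW k e b / 2 ^ (k+1) = cond (xor e (par k b)) 1 0 := by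
  have h3 : rW k e b / 2 ^ (k+1) = rW k e b / 2 / 2 ^ k := by
    rw [Nat.div_div_eq_div_mul]; congr 1; ring
  rw [h3, rW_div2]
  cases xor e (par k b)
  · simpa using Nat.div_eq_of_lt hb
  · simp only [cond_true, one_mul]
    rw [Nat.add_div_right _ (Nat.two_pow_pos k)]
    rw [Nat.div_eq_of_lt hb]

lemma rW_testBit0 (k : ℕ) (e : Bool) (b : ℕ) : (rW k e b).testBit 0 = e := by
  have h1 : (2:ℕ) ^ (k+1) = 2 * 2 ^ k := by ring
  rw [Nat.testBit_zero]
  unfold rW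
  cases e <;> cases xor _ (par k b) <;> simp [h1] <;> omega

lemma rW_par (k : ℕ) (e : Bool) {b : ℕ} (hb : b < 2 ^ k) :
    par (k+2) (rW k e b) = false := by
  rw [show k + 2 = (k+1)+1 from rfl, par_lsb, rW_testBit0]
  have hdom : rW k e b / 2 % 2 ^ k = b := rW_div2_mod k e hb
  have hstep : par (k+1) (rW k e b / 2) =
      xor (par k (rW k e b / 2)) ((rW k e b / 2).testBit k) := rfl
  rw [hstep, ← par_mod k (rW k e b / 2), hdom]
  have htop : (rW k e b / 2).testBit k = xor e (par k b) := by
    rw [Nat.testBit_eq_decide_div_mod_eq]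
    have : rW k e b / 2 / 2 ^ k = rW k e b / 2 ^ (k+1) := by
      rw [Nat.div_div_eq_div_mul]; congr 1; ring
    rw [this, rW_div_top k e hb]
    cases xor e (par k b) <;> simp
  rw [htop]
  cases e <;> cases par k b <;> rfl

lemma fiber (k : ℕ) {b : ℕ} (hb : b < 2 ^ k) (r : ℕ) (hrlt : r < 2 ^ (k+2)) :
    (par (k+2) r = false ∧ r / 2 % 2 ^ k = b) ↔
      (r = rW k false b ∨ r = rW k true b) := by
  constructor
  · rintro ⟨hpar, hmid⟩
    have e1 : r % 2 + 2 * (r / 2) = r := Nat.mod_add_div r 2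
    have e2 : r / 2 % 2 ^ k + 2 ^ k * (r / 2 / 2 ^ k) = r / 2 := Nat.mod_add_div _ _
    have e3 : r / 2 / 2 ^ k = r / 2 ^ (k+1) := by
      rw [Nat.div_div_eq_div_mul]; congr 1; ring
    have e4 : r / 2 ^ (k+1) < 2 := by
      apply Nat.div_lt_of_lt_mul
      have h5 : (2:ℕ) ^ (k+1) * 2 = 2 ^ (k+2) := by ring
      omega
    rw [e3, hmid] at e2
    have hrec : r = r % 2 + 2 * b + 2 ^ (k+1) * (r / 2 ^ (k+1)) :=
      calc r = r % 2 + 2 * (r / 2) := e1.symm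
        _ = r % 2 + 2 * (b + 2 ^ k * (r / 2 ^ (k+1))) := by rw [e2]
        _ = r % 2 + 2 * b + 2 ^ (k+1) * (r / 2 ^ (k+1)) := by ring
    have hTbit : (r / 2).testBit k = decide (r / 2 ^ (k+1) % 2 = 1) := by
      rw [Nat.testBit_eq_decide_div_mod_eq, e3]
    have hTv : r / 2 ^ (k+1) = cond ((r / 2).testBit k) 1 0 := by
      cases htk : (r / 2).testBit k
      · have h' : ¬ (r / 2 ^ (k+1) % 2 = 1) := by
          intro h
          rw [htk] at hTbit
          rw [h] at hTbit
          simp at hTbit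
        simp only [cond_false]
        generalize hg : r / 2 ^ (k+1) = T at e4 h' ⊢
        omega
      · have h' : r / 2 ^ (k+1) % 2 = 1 := by
          rw [htk] at hTbit
          exact of_decide_eq_true hTbit.symm
        simp only [cond_true]
        generalize hg : r / 2 ^ (k+1) = T at e4 h' ⊢
        omega
    have hparexp : par (k+2) r =
        xor (r.testBit 0) (xor (par k b) ((r/2).testBit k)) := by
      rw [show k + 2 = (k+1)+1 from rfl, par_lsb]
      have hstep : par (k+1) (r / 2) = xor (par k (r/2)) ((r/2).testBit k) := rfl
      rw [hstep, ← par_mod k (r/2), hmid]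
    rw [hparexp] at hpar
    rcases (by omega : r % 2 = 0 ∨ r % 2 = 1) with h0 | h0
    · left
      have he : r.testBit 0 = false := by rw [Nat.testBit_zero, h0]; rfl
      rw [he] at hpar
      have hT : (r / 2).testBit k = par k b := by
        revert hpar
        cases hpb : par k b <;> cases htk : (r / 2).testBit k <;> decide
      rw [hT] at hTv
      unfold rW
      rw [Bool.false_xor]
      cases hpb : par k b <;> rw [hpb] at hTv <;> simp only [cond_true, cond_false] at hTv ⊢ <;>
        rw [hTv] at hrec <;> omega
    · right
      have he : r.testBit 0 = true := by rw [Nat.testBit_zero, h0]; rfl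
      rw [he] at hpar
      have hT : (r / 2).testBit k = !(par k b) := by
        revert hpar
        cases hpb : par k b <;> cases htk : (r / 2).testBit k <;> decide
      rw [hT] at hTv
      unfold rW
      rw [Bool.true_xor]
      cases hpb : par k b <;> rw [hpb] at hTv <;>
        simp only [cond_true, cond_false, Bool.not_true, Bool.not_false] at hTv ⊢ <;>
        rw [hTv] at hrec <;> omega
  · rintro (rfl | rfl) <;>
      exact ⟨rW_par k _ hb, rW_div2_mod k _ hb⟩

lemma rW_testBit_top (k : ℕ) (e : Bool) {b : ℕ} (hb : b < 2 ^ k) :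
    (rW k e b).testBit (k+1) = xor e (par k b) := by
  rw [Nat.testBit_eq_decide_div_mod_eq, rW_div_top k e hb]
  cases xor e (par k b) <;> simp

def Wmat (m : ℕ) : Matrix (Fin (2 ^ m)) (Fin (2 ^ m)) ℕ :=
  Matrix.of fun l r =>
    if par m ((l : ℕ) ^^^ (r : ℕ)) = false then colProd m l r false else 0

def Pmat (k : ℕ) : Matrix (Fin (2 ^ (k+2))) (Fin (2 ^ k)) ℕ :=
  Matrix.of fun r b =>
    if par (k+2) (r : ℕ) = false ∧ (r : ℕ) / 2 % 2 ^ k = (b : ℕ) then 1 else 0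

def Qmat (k : ℕ) : Matrix (Fin (2 ^ k)) (Fin (2 ^ k)) ℕ :=
  Matrix.of fun a b => colProd k a b false + colProd k a b true

lemma sum_fiber (k : ℕ) (b : Fin (2 ^ k)) (g : Fin (2 ^ (k+2)) → ℕ) :
    (∑ r : Fin (2 ^ (k+2)),
      if par (k+2) (r : ℕ) = false ∧ (r : ℕ) / 2 % 2 ^ k = (b : ℕ) then g r else 0)
      = g ⟨rW k false b, rW_lt k false b.isLt⟩ + g ⟨rW k true b, rW_lt k true b.isLt⟩ := by
  have hb := b.isLt
  set x1 : Fin (2 ^ (k+2)) := ⟨rW k false b, rW_lt k false hb⟩ with hx1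
  set x2 : Fin (2 ^ (k+2)) := ⟨rW k true b, rW_lt k true hb⟩ with hx2
  have hne : x1 ≠ x2 := by
    intro h
    have h0 : (rW k false (b:ℕ)).testBit 0 = (rW k true (b:ℕ)).testBit 0 := by
      rw [show rW k false (b:ℕ) = rW k true (b:ℕ) from congrArg Fin.val h]
    rw [rW_testBit0, rW_testBit0] at h0
    exact absurd h0 (by decide)
  have hz : ∀ r ∈ (Finset.univ : Finset (Fin (2 ^ (k+2)))),
      r ∉ ({x1, x2} : Finset (Fin (2 ^ (k+2)))) →
      (if par (k+2) (r : ℕ) = false ∧ (r : ℕ) / 2 % 2 ^ k = (b : ℕ) then g r else 0) = 0 := by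
    intro r _ hr
    rw [if_neg]
    intro hcond
    rcases (fiber k hb (r : ℕ) r.isLt).mp hcond with h | h
    · exact hr (by
        rw [Finset.mem_insert]
        left
        exact Fin.ext h)
    · exact hr (by
        rw [Finset.mem_insert, Finset.mem_singleton]
        right
        exact Fin.ext h)
  have hsum := Finset.sum_subset (Finset.subset_univ ({x1, x2} : Finset (Fin (2 ^ (k+2))))) hz
  rw [← hsum, Finset.sum_pair hne]
  rw [if_pos ⟨rW_par k false hb, rW_div2_mod k false hb⟩,
      if_pos ⟨rW_par k true hb, rW_div2_mod k true hb⟩]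

lemma Wmat_mul_Pmat (k : ℕ) : Wmat (k+2) * Pmat k = Pmat k * Qmat k := by
  ext l b
  rw [Matrix.mul_apply, Matrix.mul_apply]
  have hinner : (l : ℕ) / 2 % 2 ^ k < 2 ^ k := Nat.mod_lt _ (Nat.two_pow_pos k)
  have hR : (∑ a, Pmat k l a * Qmat k a b)
      = if par (k+2) (l : ℕ) = false then Qmat k ⟨(l : ℕ) / 2 % 2 ^ k, hinner⟩ b else 0 := by
    rw [Finset.sum_eq_single (⟨(l : ℕ) / 2 % 2 ^ k, hinner⟩ : Fin (2 ^ k))]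
    · simp only [Pmat, Matrix.of_apply]
      by_cases hp : par (k+2) (l : ℕ) = false
      · simp [hp]
      · simp [hp]
    · intro a _ ha
      simp only [Pmat, Matrix.of_apply]
      rw [if_neg, zero_mul]
      rintro ⟨_, h2⟩
      exact ha (Fin.ext h2.symm)
    · intro h
      exact absurd (Finset.mem_univ _) h
  have hL : (∑ r, Wmat (k+2) l r * Pmat k r b)
      = Wmat (k+2) l ⟨rW k false b, rW_lt k false b.isLt⟩
        + Wmat (k+2) l ⟨rW k true b, rW_lt k true b.isLt⟩ := by
    rw [← sum_fiber k b (fun r => Wmat (k+2) l r)]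
    apply Finset.sum_congr rfl
    intro r _
    simp only [Pmat, Matrix.of_apply, mul_ite, mul_one, mul_zero]
  rw [hL, hR]
  by_cases hp : par (k+2) (l : ℕ) = false
  · rw [if_pos hp]
    have hWe : ∀ e : Bool, Wmat (k+2) l ⟨rW k e b, rW_lt k e b.isLt⟩
        = colProd k ((l : ℕ) / 2 % 2 ^ k) ((b : ℕ))
            (xor ((l : ℕ).testBit (k+1)) (xor e (par k (b : ℕ)))) := by
      intro e
      have hpr := rW_par k e b.isLt
      have hpx : par (k+2) ((l : ℕ) ^^^ rW k e (b : ℕ)) = false := by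
        rw [par_xor, hp, hpr]
        rfl
      simp only [Wmat, Matrix.of_apply]
      rw [if_pos hpx, colProd_split k _ _ hp hpr, rW_div2_mod k e b.isLt,
        rW_testBit_top k e b.isLt]
    rw [hWe false, hWe true]
    simp only [Qmat, Matrix.of_apply]
    cases ht : (l : ℕ).testBit (k+1) <;> cases hpb : par k (b : ℕ) <;>
      simp only [Bool.xor_false, Bool.xor_true, Bool.false_xor, Bool.true_xor,
        Bool.not_false, Bool.not_true] <;>
      first | rfl | exact add_comm _ _
  · rw [if_neg hp]
    have hWe : ∀ e : Bool, Wmat (k+2) l ⟨rW k e b, rW_lt k e b.isLt⟩ = 0 := by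
      intro e
      simp only [Wmat, Matrix.of_apply]
      rw [if_neg]
      intro hpx
      rw [par_xor, rW_par k e b.isLt, Bool.xor_false] at hpx
      exact hp hpx
    rw [hWe false, hWe true]

lemma WP_pow (k N : ℕ) : Wmat (k+2) ^ N * Pmat k = Pmat k * Qmat k ^ N := by
  induction N with
  | zero => rw [pow_zero, pow_zero, Matrix.one_mul, Matrix.mul_one]
  | succ N ih =>
    have h1 : Wmat (k+2) ^ (N+1) = Wmat (k+2) ^ N * Wmat (k+2) := pow_succ _ _
    have h2 : Qmat k ^ (N+1) = Qmat k ^ N * Qmat k := pow_succ _ _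
    rw [h1, h2, Matrix.mul_assoc, Wmat_mul_Pmat, ← Matrix.mul_assoc, ih, Matrix.mul_assoc]

lemma sum_Pmat_col (k : ℕ) (a : Fin (2 ^ k)) : (∑ l, Pmat k l a) = 2 := by
  have h := sum_fiber k a (fun _ => (1 : ℕ))
  calc (∑ l, Pmat k l a)
      = ∑ r : Fin (2 ^ (k+2)),
          (if par (k+2) (r : ℕ) = false ∧ (r : ℕ) / 2 % 2 ^ k = (a : ℕ) then (1:ℕ) else 0) := by
        apply Finset.sum_congr rfl; intro r _; rfl
    _ = 2 := by rw [h]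

lemma sum_Pmat_row (k : ℕ) (r : Fin (2 ^ (k+2))) :
    (∑ b, Pmat k r b) = if par (k+2) (r : ℕ) = false then 1 else 0 := by
  have hinner : (r : ℕ) / 2 % 2 ^ k < 2 ^ k := Nat.mod_lt _ (Nat.two_pow_pos k)
  rw [Finset.sum_eq_single (⟨(r : ℕ) / 2 % 2 ^ k, hinner⟩ : Fin (2 ^ k))]
  · simp only [Pmat, Matrix.of_apply]
    by_cases hp : par (k+2) (r : ℕ) = false
    · simp [hp]
    · simp [hp]
  · intro b _ hb
    simp only [Pmat, Matrix.of_apply]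
    rw [if_neg]
    rintro ⟨_, h2⟩
    exact hb (Fin.ext h2.symm)
  · intro h
    exact absurd (Finset.mem_univ _) h

lemma Wpow_00 (k N : ℕ) :
    (Wmat (k+2) ^ (N + 2)) ⟨0, Nat.two_pow_pos _⟩ ⟨0, Nat.two_pow_pos _⟩
      = 2 * ∑ a, ∑ b, (Qmat k ^ N) a b := by
  have hW : Wmat (k+2) ^ (N+2) = Wmat (k+2) * ((Wmat (k+2) ^ N) * Wmat (k+2)) := by
    rw [← pow_succ, ← pow_succ']
  have hWrow : ∀ s : Fin (2 ^ (k+2)),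
      Wmat (k+2) ⟨0, Nat.two_pow_pos _⟩ s = if par (k+2) (s : ℕ) = false then 1 else 0 := by
    intro s
    simp only [Wmat, Matrix.of_apply]
    rw [show ((⟨0, Nat.two_pow_pos _⟩ : Fin (2 ^ (k+2))) : ℕ) ^^^ (s : ℕ) = (s : ℕ) by
      simp, colProd_zero_left]
  have hWcol : ∀ s : Fin (2 ^ (k+2)),
      Wmat (k+2) s ⟨0, Nat.two_pow_pos _⟩ = if par (k+2) (s : ℕ) = false then 1 else 0 := by
    intro s
    simp only [Wmat, Matrix.of_apply]
    rw [show (s : ℕ) ^^^ ((⟨0, Nat.two_pow_pos _⟩ : Fin (2 ^ (k+2))) : ℕ) = (s : ℕ) by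
      simp, colProd_zero_right]
  rw [hW, Matrix.mul_apply]
  have step1 : ∀ l : Fin (2 ^ (k+2)),
      ((Wmat (k+2) ^ N) * Wmat (k+2)) l ⟨0, Nat.two_pow_pos _⟩
        = ∑ b, (Pmat k * Qmat k ^ N) l b := by
    intro l
    rw [Matrix.mul_apply]
    calc (∑ r, (Wmat (k+2) ^ N) l r * Wmat (k+2) r ⟨0, Nat.two_pow_pos _⟩)
        = ∑ r, (Wmat (k+2) ^ N) l r * ∑ b, Pmat k r b := by
          apply Finset.sum_congr rfl
          intro r _
          rw [hWcol r, sum_Pmat_row k r]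
      _ = ∑ r, ∑ b, (Wmat (k+2) ^ N) l r * Pmat k r b := by
          apply Finset.sum_congr rfl
          intro r _
          rw [Finset.mul_sum]
      _ = ∑ b, ∑ r, (Wmat (k+2) ^ N) l r * Pmat k r b := Finset.sum_comm
      _ = ∑ b, (Wmat (k+2) ^ N * Pmat k) l b := by
          apply Finset.sum_congr rfl
          intro b _
          rw [Matrix.mul_apply]
      _ = ∑ b, (Pmat k * Qmat k ^ N) l b := by rw [WP_pow]
  have upl : ∀ (l : Fin (2 ^ (k+2))) (a : Fin (2 ^ k)),
      (if par (k+2) (l : ℕ) = false then (1:ℕ) else 0) * Pmat k l a = Pmat k l a := by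
    intro l a
    by_cases hp : par (k+2) (l : ℕ) = false
    · rw [if_pos hp, one_mul]
    · rw [if_neg hp, zero_mul]
      simp only [Pmat, Matrix.of_apply]
      rw [if_neg (fun hc => hp hc.1)]
  calc (∑ l, Wmat (k+2) ⟨0, Nat.two_pow_pos _⟩ l
        * ((Wmat (k+2) ^ N) * Wmat (k+2)) l ⟨0, Nat.two_pow_pos _⟩)
      = ∑ l, ∑ b, ∑ a, Pmat k l a * (Qmat k ^ N) a b := by
        apply Finset.sum_congr rfl
        intro l _
        rw [step1 l, hWrow l, Finset.mul_sum]
        apply Finset.sum_congr rfl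
        intro b _
        rw [Matrix.mul_apply, Finset.mul_sum]
        apply Finset.sum_congr rfl
        intro a _
        rw [← mul_assoc, upl]
    _ = ∑ b, ∑ a, ∑ l, Pmat k l a * (Qmat k ^ N) a b := by
        rw [Finset.sum_comm]
        apply Finset.sum_congr rfl
        intro b _
        rw [Finset.sum_comm]
    _ = ∑ a, ∑ b, ∑ l, Pmat k l a * (Qmat k ^ N) a b := Finset.sum_comm
    _ = ∑ a, ∑ b, (∑ l, Pmat k l a) * (Qmat k ^ N) a b := by
        apply Finset.sum_congr rfl
        intro a _
        apply Finset.sum_congr rfl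
        intro b _
        rw [Finset.sum_mul]
    _ = ∑ a, ∑ b, 2 * (Qmat k ^ N) a b := by
        apply Finset.sum_congr rfl
        intro a _
        apply Finset.sum_congr rfl
        intro b _
        rw [sum_Pmat_col]
    _ = 2 * ∑ a, ∑ b, (Qmat k ^ N) a b := by
        rw [Finset.mul_sum]
        apply Finset.sum_congr rfl
        intro a _
        rw [Finset.mul_sum]

lemma Qmat_eq (k : ℕ) : Qmat k = Xmat k + Omat k := by
  ext a b
  simp [Qmat, Xmat, Omat, Matrix.add_apply, matsXO_eq]


-- tiles
lemma tile_parity : ∀ t : Fin 11, cpB t = xor (cpT t) (xor (cpL t) (cpR t)) := by decide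

lemma tile_card (l r h : Bool) :
    Nat.card {t : Fin 11 // cpL t = l ∧ cpR t = r ∧ cpT t = h ∧ cpB t = xor h (xor l r)}
      = f4 l r h := by
  rw [Nat.card_eq_fintype_card]
  cases l <;> cases r <;> cases h <;> decide

-- column predicates
def ColFull (m a b : ℕ) (c : Fin m → Fin 11) : Prop :=
  (∀ (i : Fin m) (h : i.val + 1 < m), cpB (c i) = cpT (c ⟨i.val + 1, h⟩)) ∧
  (∀ i : Fin m, (i.val = 0 → cpT (c i) = false) ∧ (i.val = m - 1 → cpB (c i) = false)) ∧
  (∀ i : Fin m, cpL (c i) = a.testBit i.val) ∧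
  (∀ i : Fin m, cpR (c i) = b.testBit i.val)

noncomputable def colCard (m a b : ℕ) : ℕ := Nat.card {c : Fin m → Fin 11 // ColFull m a b c}

lemma key_top {m a b : ℕ} {c : Fin m → Fin 11} (hc : ColFull m a b c) :
    ∀ (j : ℕ) (h : j < m), cpT (c ⟨j, h⟩) = par j (a ^^^ b) := by
  intro j
  induction j with
  | zero => intro h; exact (hc.2.1 ⟨0, h⟩).1 rfl
  | succ j ih =>
    intro h
    have hj : j < m := by omega
    have h1 : cpB (c ⟨j, hj⟩) = cpT (c ⟨j+1, h⟩) := hc.1 ⟨j, hj⟩ h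
    rw [← h1, tile_parity, ih hj, hc.2.2.1 ⟨j, hj⟩, hc.2.2.2 ⟨j, hj⟩]
    show _ = par (j+1) (a ^^^ b)
    have : par (j+1) (a ^^^ b) = xor (par j (a ^^^ b)) ((a ^^^ b).testBit j) := rfl
    rw [this, Nat.testBit_xor]

lemma key_bot {m a b : ℕ} {c : Fin m → Fin 11} (hc : ColFull m a b c) (i : Fin m) :
    cpB (c i) = par (i.val + 1) (a ^^^ b) := by
  rw [tile_parity, show c i = c ⟨i.val, i.isLt⟩ by rfl, key_top hc i.val i.isLt,
    hc.2.2.1 ⟨i.val, i.isLt⟩, hc.2.2.2 ⟨i.val, i.isLt⟩]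
  have : par (i.val+1) (a ^^^ b) = xor (par i.val (a ^^^ b)) ((a ^^^ b).testBit i.val) := rfl
  rw [this, Nat.testBit_xor]

lemma prod_eq_colProd (m a b : ℕ) (c : Bool) :
    (∏ i : Fin m, f4 (a.testBit i.val) (b.testBit i.val) (xor c (par i.val (a ^^^ b))))
      = colProd m a b (xor c (par m (a ^^^ b))) := by
  induction m with
  | zero => rfl
  | succ m ih =>
    rw [Fin.prod_univ_castSucc]
    have hlast : ((Fin.last m).val) = m := rfl
    have hcast : ∀ i : Fin m, ((Fin.castSucc i).val) = i.val := fun i => rfl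
    simp only [hlast, hcast]
    rw [ih]
    show _ = colProd (m+1) a b (xor c (par (m+1) (a ^^^ b)))
    have hrec : colProd (m+1) a b (xor c (par (m+1) (a ^^^ b)))
        = f4 (a.testBit m) (b.testBit m)
            (xor (xor c (par (m+1) (a ^^^ b))) (xor (a.testBit m) (b.testBit m))) *
          colProd m a b
            (xor (xor c (par (m+1) (a ^^^ b))) (xor (a.testBit m) (b.testBit m))) := rfl
    have harg : xor (xor c (par (m+1) (a ^^^ b))) (xor (a.testBit m) (b.testBit m))
        = xor c (par m (a ^^^ b)) := by
      have h1 : par (m+1) (a ^^^ b) = xor (par m (a ^^^ b)) ((a ^^^ b).testBit m) := rfl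
      rw [h1, Nat.testBit_xor]
      cases c <;> cases par m (a ^^^ b) <;> cases a.testBit m <;> cases b.testBit m <;> rfl
    rw [hrec, harg, mul_comm]

def pred (m a b : ℕ) (i : Fin m) (t : Fin 11) : Prop :=
  cpL t = a.testBit i.val ∧ cpR t = b.testBit i.val ∧
    cpT t = par i.val (a ^^^ b) ∧
    cpB t = xor (par i.val (a ^^^ b)) (xor (a.testBit i.val) (b.testBit i.val))

lemma par_succ (j x : ℕ) : par (j+1) x = xor (par j x) (x.testBit j) := rfl

lemma colCard_eq (m a b : ℕ) (hm : 0 < m) :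
    colCard m a b = if par m (a ^^^ b) = false then colProd m a b false else 0 := by
  by_cases hp : par m (a ^^^ b) = false
  · rw [if_pos hp]
    have hiff : ∀ c : Fin m → Fin 11, ColFull m a b c ↔ (∀ i : Fin m, pred m a b i (c i)) := by
      intro c
      constructor
      · intro hc i
        refine ⟨hc.2.2.1 i, hc.2.2.2 i, key_top hc i.val i.isLt, ?_⟩
        rw [key_bot hc i, par_succ, Nat.testBit_xor]
      · intro hp2
        refine ⟨?_, ?_, fun i => (hp2 i).1, fun i => (hp2 i).2.1⟩
        · intro i h
          rw [(hp2 i).2.2.2, (hp2 ⟨i.val+1, h⟩).2.2.1]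
          show _ = par (i.val+1) (a ^^^ b)
          rw [par_succ, Nat.testBit_xor]
        · intro i
          constructor
          · intro h0
            rw [(hp2 i).2.2.1, h0]
            rfl
          · intro hlast
            have h3 : i.val + 1 = m := by omega
            have hbot : cpB (c i) = par (i.val + 1) (a ^^^ b) := by
              rw [(hp2 i).2.2.2, par_succ, Nat.testBit_xor]
            rw [hbot, h3, hp]
    unfold colCard
    rw [Nat.card_congr (Equiv.subtypeEquivRight hiff)]
    rw [Nat.card_congr (Equiv.subtypePiEquivPi (p := pred m a b))]
    rw [Nat.card_pi]
    have hterm : ∀ i : Fin m, Nat.card {t : Fin 11 // pred m a b i t}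
        = f4 (a.testBit i.val) (b.testBit i.val) (par i.val (a ^^^ b)) :=
      fun i => tile_card (a.testBit i.val) (b.testBit i.val) (par i.val (a ^^^ b))
    calc (∏ i : Fin m, Nat.card {t : Fin 11 // pred m a b i t})
        = ∏ i : Fin m, f4 (a.testBit i.val) (b.testBit i.val)
            (xor false (par i.val (a ^^^ b))) := by
          apply Finset.prod_congr rfl
          intro i _
          rw [Bool.false_xor]
          exact hterm i
      _ = colProd m a b (xor false (par m (a ^^^ b))) := prod_eq_colProd m a b false
      _ = colProd m a b false := by rw [hp, Bool.xor_false]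
  · rw [if_neg hp]
    have : IsEmpty {c : Fin m → Fin 11 // ColFull m a b c} := by
      constructor
      rintro ⟨c, hc⟩
      have hlt : m - 1 < m := by omega
      have h1 : cpB (c ⟨m-1, hlt⟩) = par (m - 1 + 1) (a ^^^ b) := key_bot hc ⟨m-1, hlt⟩
      have h2 : cpB (c ⟨m-1, hlt⟩) = false := (hc.2.1 ⟨m-1, hlt⟩).2 rfl
      rw [h2] at h1
      have h3 : m - 1 + 1 = m := by omega
      rw [h3] at h1
      exact hp h1.symm
    exact Nat.card_of_isEmpty

def stateOf' {m : ℕ} (a : Fin (2 ^ m)) : Fin m → Bool := fun r => (a : ℕ).testBit r.val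

lemma stateOf_bijective (m : ℕ) : Function.Bijective (stateOf' (m := m)) := by
  rw [Fintype.bijective_iff_injective_and_card]
  constructor
  · intro x y h
    apply Fin.ext
    apply Nat.eq_of_testBit_eq
    intro i
    by_cases hi : i < m
    · exact congrFun h ⟨i, hi⟩
    · rw [Nat.testBit_eq_false_of_lt, Nat.testBit_eq_false_of_lt]
      · exact lt_of_lt_of_le y.isLt (Nat.pow_le_pow_right (by norm_num) (by omega))
      · exact lt_of_lt_of_le x.isLt (Nat.pow_le_pow_right (by norm_num) (by omega))
  · simp

noncomputable def stEquiv (m : ℕ) : Fin (2 ^ m) ≃ (Fin m → Bool) :=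
  Equiv.ofBijective _ (stateOf_bijective m)

lemma stEquiv_apply (m : ℕ) (a : Fin (2 ^ m)) (i : Fin m) :
    stEquiv m a i = (a : ℕ).testBit i.val := rfl

def MosP (m n : ℕ) (b : ℕ) (M : Mosaic m n) : Prop :=
  SuitablyConnected M ∧
  (∀ (i : Fin m) (j : Fin n),
    (j.val = 0 → cpL (M i j) = false) ∧ (i.val = 0 → cpT (M i j) = false) ∧
    (i.val = m - 1 → cpB (M i j) = false)) ∧
  (∀ (i : Fin m) (j : Fin n), j.val = n - 1 → cpR (M i j) = b.testBit i.val)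

noncomputable def Cnt (m n : ℕ) (b : ℕ) : ℕ := Nat.card {M : Mosaic m n // MosP m n b M}

lemma DK_eq_Cnt (m n : ℕ) : DK m n = Cnt m n 0 := by
  unfold DK Cnt
  apply Nat.card_congr
  apply Equiv.subtypeEquivRight
  intro M
  constructor
  · intro h
    refine ⟨h.1, fun i j => ⟨(h.2 i j).1, (h.2 i j).2.2.1, (h.2 i j).2.2.2⟩, fun i j hj => ?_⟩
    rw [(h.2 i j).2.1 hj, Nat.zero_testBit]
  · intro h
    refine ⟨h.1, fun i j => ⟨(h.2.1 i j).1, fun hj => ?_, (h.2.1 i j).2.1, (h.2.1 i j).2.2⟩⟩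
    rw [h.2.2 i j hj, Nat.zero_testBit]

lemma Cnt_one (m : ℕ) (hm : 0 < m) (b : ℕ) : Cnt m 1 b = colCard m 0 b := by
  unfold Cnt colCard
  apply Nat.card_congr
  refine ⟨fun M => ⟨fun i => M.1 i ⟨0, Nat.one_pos⟩, ?_⟩,
    fun c => ⟨fun i _ => c.1 i, ?_⟩, ?_, ?_⟩
  · obtain ⟨M, hM⟩ := M
    refine ⟨fun i h => hM.1.2 i h ⟨0, Nat.one_pos⟩,
      fun i => ⟨(hM.2.1 i ⟨0, Nat.one_pos⟩).2.1, (hM.2.1 i ⟨0, Nat.one_pos⟩).2.2⟩,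
      fun i => ?_, fun i => hM.2.2 i ⟨0, Nat.one_pos⟩ rfl⟩
    rw [Nat.zero_testBit]
    exact (hM.2.1 i ⟨0, Nat.one_pos⟩).1 rfl
  · obtain ⟨c, hc⟩ := c
    refine ⟨⟨fun i j h => absurd h (by omega), fun i h j => hc.1 i h⟩,
      fun i j => ⟨fun _ => ?_, fun h0 => (hc.2.1 i).1 h0, fun hl => (hc.2.1 i).2 hl⟩,
      fun i j _ => hc.2.2.2 i⟩
    have := hc.2.2.1 i
    rw [Nat.zero_testBit] at this
    exact this
  · intro M
    apply Subtype.ext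
    funext i j
    have : j = ⟨0, Nat.one_pos⟩ := Subsingleton.elim _ _
    rw [this]
  · intro c
    apply Subtype.ext
    rfl

lemma nat_card_sigma {ι : Type} [Fintype ι] (β : ι → Type) [∀ i, Finite (β i)] :
    Nat.card (Σ i, β i) = ∑ i, Nat.card (β i) := by
  letI : ∀ i, Fintype (β i) := fun i => Fintype.ofFinite _
  rw [Nat.card_eq_fintype_card, Fintype.card_sigma]
  exact Finset.sum_congr rfl fun i _ => (Nat.card_eq_fintype_card).symm

lemma Cnt_succ (m n : ℕ) (hm : 0 < m) (hn : 0 < n) (b : ℕ) :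
    Cnt m (n+1) b = ∑ a : Fin (2 ^ m), Cnt m n (a : ℕ) * colCard m (a : ℕ) b := by
  classical
  set T := {M : Mosaic m (n+1) // MosP m (n+1) b M} with hT
  let F : T → Fin (2 ^ m) := fun M => (stEquiv m).symm (fun i => cpL (M.1 i (Fin.last n)))
  have h1 : Cnt m (n+1) b = ∑ a : Fin (2 ^ m), Nat.card {M : T // F M = a} := by
    unfold Cnt
    rw [Nat.card_congr (Equiv.sigmaFiberEquiv F).symm, nat_card_sigma]
  rw [h1]
  apply Finset.sum_congr rfl
  intro a _
  rw [show Cnt m n (a : ℕ) * colCard m (a : ℕ) b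
      = Nat.card ({M' : Mosaic m n // MosP m n (a : ℕ) M'} ×
          {c : Fin m → Fin 11 // ColFull m (a : ℕ) b c}) from (Nat.card_prod _ _).symm]
  apply Nat.card_congr
  -- pointwise characterization of the fiber condition
  have hFiff : ∀ M : T, F M = a ↔ ∀ i, cpL (M.1 i (Fin.last n)) = (a : ℕ).testBit i.val := by
    intro M
    rw [show F M = (stEquiv m).symm (fun i => cpL (M.1 i (Fin.last n))) from rfl,
      Equiv.symm_apply_eq]
    constructor
    · intro h i
      exact congrFun h i
    · intro h
      funext i
      exact h i
  refine ⟨fun MM => ⟨⟨fun i j => MM.1.1 i j.castSucc, ?_⟩, ⟨fun i => MM.1.1 i (Fin.last n), ?_⟩⟩,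
    fun X => ⟨⟨fun i => Fin.snoc (X.1.1 i) (X.2.1 i), ?_⟩, ?_⟩, ?_, ?_⟩
  case _ =>
    -- prefix satisfies MosP m n a
    obtain ⟨⟨M, hM⟩, hFa⟩ := MM
    have hF : ∀ i, cpL (M i (Fin.last n)) = (a : ℕ).testBit i.val := (hFiff _).mp hFa
    refine ⟨⟨fun i j h => hM.1.1 i j.castSucc (by simp only [Fin.coe_castSucc]; omega), fun i h j => hM.1.2 i h j.castSucc⟩,
      fun i j => ⟨(hM.2.1 i j.castSucc).1, (hM.2.1 i j.castSucc).2.1,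
        (hM.2.1 i j.castSucc).2.2⟩, fun i j hj => ?_⟩
    have hj1 : j.val + 1 = n := by omega
    have hH := hM.1.1 i j.castSucc (show j.castSucc.val + 1 < n + 1 by
      simp only [Fin.coe_castSucc]; omega)
    have hlast : (⟨j.castSucc.val + 1, by simp only [Fin.coe_castSucc]; omega⟩ : Fin (n+1))
        = Fin.last n := by
      apply Fin.ext
      simp only [Fin.coe_castSucc, Fin.val_last]
      omega
    rw [hlast] at hH
    rw [hH, hF i]
  case _ =>
    -- last column satisfies ColFull m a b
    obtain ⟨⟨M, hM⟩, hFa⟩ := MM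
    have hF : ∀ i, cpL (M i (Fin.last n)) = (a : ℕ).testBit i.val := (hFiff _).mp hFa
    exact ⟨fun i h => hM.1.2 i h (Fin.last n),
      fun i => ⟨(hM.2.1 i (Fin.last n)).2.1, (hM.2.1 i (Fin.last n)).2.2⟩,
      hF, fun i => hM.2.2 i (Fin.last n) rfl⟩
  case _ =>
    -- glued mosaic satisfies MosP m (n+1) b
    obtain ⟨⟨M', hM'⟩, ⟨c, hc⟩⟩ := X
    have hcs : ∀ (i : Fin m) (j : Fin n),
        (Fin.snoc (M' i) (c i) : Fin (n+1) → Fin 11) j.castSucc = M' i j := fun i j => by simp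
    have hlx : ∀ i : Fin m, (Fin.snoc (M' i) (c i) : Fin (n+1) → Fin 11) (Fin.last n) = c i :=
      fun i => by simp
    refine ⟨⟨?_, ?_⟩, ?_, ?_⟩
    · intro i j h
      rcases j with ⟨jv, hjv⟩
      have h' : jv + 1 < n + 1 := h
      have hjlt : jv < n := by omega
      rcases Nat.lt_or_ge (jv + 1) n with hlt | hge
      · show cpR ((Fin.snoc (M' i) (c i) : Fin (n+1) → Fin 11) (Fin.castSucc ⟨jv, hjlt⟩))
            = cpL ((Fin.snoc (M' i) (c i) : Fin (n+1) → Fin 11) (Fin.castSucc ⟨jv + 1, hlt⟩))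
        rw [hcs, hcs]
        exact hM'.1.1 i ⟨jv, hjlt⟩ hlt
      · have hn1 : jv + 1 = n := by omega
        clear h'
        show cpR ((Fin.snoc (M' i) (c i) : Fin (n+1) → Fin 11) (Fin.castSucc ⟨jv, hjlt⟩))
            = cpL ((Fin.snoc (M' i) (c i) : Fin (n+1) → Fin 11) ⟨jv + 1, h⟩)
        have hj2 : (⟨jv + 1, h⟩ : Fin (n+1)) = Fin.last n := Fin.ext hn1
        rw [hj2, hcs, hlx]
        have h1 := hM'.2.2 i ⟨jv, hjlt⟩ (show jv = n - 1 by omega)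
        rw [h1, hc.2.2.1 i]
    · intro i h j
      refine Fin.lastCases ?_ ?_ j
      · dsimp only
        rw [hlx, hlx]
        exact hc.1 i h
      · intro j'
        dsimp only
        rw [hcs, hcs]
        exact hM'.1.2 i h j'
    · intro i j
      refine Fin.lastCases ?_ ?_ j
      · refine ⟨fun h0 => absurd h0 (by simp; omega), fun h0 => ?_, fun hl => ?_⟩
        · dsimp only
          rw [hlx]
          exact (hc.2.1 i).1 h0
        · dsimp only
          rw [hlx]
          exact (hc.2.1 i).2 hl
      · intro j'
        refine ⟨fun h0 => ?_, fun h0 => ?_, fun hl => ?_⟩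
        · dsimp only
          rw [hcs]
          exact (hM'.2.1 i j').1 h0
        · dsimp only
          rw [hcs]
          exact (hM'.2.1 i j').2.1 h0
        · dsimp only
          rw [hcs]
          exact (hM'.2.1 i j').2.2 hl
    · intro i j hj
      rcases j with ⟨jv, hjv⟩
      show cpR ((Fin.snoc (M' i) (c i) : Fin (n+1) → Fin 11) ⟨jv, hjv⟩) = _
      have hj2 : (⟨jv, hjv⟩ : Fin (n+1)) = Fin.last n := Fin.ext (by simpa using hj)
      rw [hj2, hlx]
      exact hc.2.2.2 i
  case _ =>
    -- F of glued = a
    obtain ⟨⟨M', hM'⟩, ⟨c, hc⟩⟩ := X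
    apply (hFiff _).mpr
    intro i
    show cpL ((Fin.snoc (M' i) (c i) : Fin (n+1) → Fin 11) (Fin.last n)) = _
    rw [show (Fin.snoc (M' i) (c i) : Fin (n+1) → Fin 11) (Fin.last n) = c i from by simp]
    exact hc.2.2.1 i
  case _ =>
    -- left inverse
    intro MM
    apply Subtype.ext
    apply Subtype.ext
    funext i j
    refine Fin.lastCases ?_ ?_ j
    · simp
    · intro j'
      simp
  case _ =>
    -- right inverse
    intro X
    refine Prod.ext ?_ ?_
    · apply Subtype.ext
      funext i j
      simp
    · apply Subtype.ext
      funext i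
      simp



lemma colCard_eq_W (m : ℕ) (hm : 0 < m) (a b : Fin (2 ^ m)) :
    colCard m (a : ℕ) (b : ℕ) = Wmat m a b := by
  rw [colCard_eq _ _ _ hm]
  rfl

lemma Cnt_matrix (m : ℕ) (hm : 0 < m) :
    ∀ n, 1 ≤ n → ∀ b : Fin (2 ^ m),
      Cnt m n (b : ℕ) = (Wmat m ^ n) ⟨0, Nat.two_pow_pos m⟩ b := by
  intro n
  induction n with
  | zero => intro h; omega
  | succ n ih =>
    intro _ b
    by_cases hn : n = 0
    · subst hn
      rw [pow_one, Cnt_one m hm, colCard_eq m 0 (b : ℕ) hm]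
      rfl
    · have hn1 : 1 ≤ n := by omega
      rw [Cnt_succ m n hm (by omega) (b : ℕ)]
      have hstep : ∀ a : Fin (2 ^ m), Cnt m n (a : ℕ) * colCard m (a : ℕ) (b : ℕ)
          = (Wmat m ^ n) ⟨0, Nat.two_pow_pos m⟩ a * Wmat m a b := by
        intro a
        rw [ih hn1 a, colCard_eq_W m hm a b]
      rw [Finset.sum_congr rfl (fun a _ => hstep a), ← Matrix.mul_apply, ← pow_succ]

end KM

/-- For all integers `m, n ≥ 2`,
`D^{(m,n)} = 2 ⬝ ‖(X_{m-2} + O_{m-2})^{n-2}‖`. -/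
theorem knot_mosaic_enumeration (m n : ℕ) (hm : 2 ≤ m) (hn : 2 ≤ n) :
    DK m n = 2 * ∑ i, ∑ j, ((Xmat (m - 2) + Omat (m - 2)) ^ (n - 2)) i j := by
  obtain ⟨k, rfl⟩ : ∃ k, m = k + 2 := ⟨m - 2, by omega⟩
  obtain ⟨N, rfl⟩ : ∃ N, n = N + 2 := ⟨n - 2, by omega⟩
  rw [KM.DK_eq_Cnt]
  rw [show (0 : ℕ) = ((⟨0, Nat.two_pow_pos (k+2)⟩ : Fin (2 ^ (k+2))) : ℕ) from rfl]
  rw [KM.Cnt_matrix (k+2) (by omega) (N+2) (by omega) ⟨0, Nat.two_pow_pos (k+2)⟩]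
  rw [KM.Wpow_00 k N]
  simp only [Nat.add_sub_cancel]
  rw [KM.Qmat_eq]
  rfl
end

section
/- For all positive integers m and n, the number of period knot (m,n)-mosaics satisfies D_P^{(m,n)} = tr((X_m^+ + O_m^+)^n). -/
/-!
A period knot mosaic is a cyclic horizontal chain of columns, and each column is a cyclic
vertical chain of tiles, adjacent pieces agreeing on their common edge. Counting cyclic chains
of pieces carrying a state on two opposite edges is a transfer-matrix computation: their number
is the trace of the product of the transfer matrices. For the columns, whose states are their
left and right words in `{o, x}^m`, this gives `D_P^{(m,n)} = tr (W ^ n)`. For the tiles of a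
column with prescribed left and right words `a`, `b`, it gives `W a b` as the trace of a product
of `2 × 2` tile matrices, and the block recursion defining `X^±`, `O^±` is the recursion of
these products, so `W = X_m^+ + O_m^+` once words are indexed by binary numbers.
-/

open Matrix

theorem Nat.card_subtype_eq_sum_card_fiber {Y ι : Type*} [Finite Y] [Fintype ι] (P : Y → Prop)
    (f : Y → ι) : Nat.card {y // P y} = ∑ i, Nat.card {y // P y ∧ f y = i} := by
  rw [← Nat.card_sigma]
  exact Nat.card_congr <| (Equiv.sigmaFiberEquiv fun y : {y // P y} ↦ f y).symm.trans <|
    Equiv.sigmaCongrRight fun i ↦ Equiv.subtypeSubtypeEquivSubtypeInter P (f · = i)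

theorem Nat.card_subtype_prod_eq_sum_mul {α β ι : Type*} [Finite α] [Finite β] [Fintype ι]
    (P : α → Prop) (f : α → ι) (Q : ι → β → Prop) :
    Nat.card {p : α × β // P p.1 ∧ Q (f p.1) p.2} =
      ∑ i, Nat.card {a // P a ∧ f a = i} * Nat.card {b // Q i b} := by
  rw [Nat.card_subtype_eq_sum_card_fiber _ fun p : α × β ↦ f p.1]
  refine Finset.sum_congr rfl fun i _ ↦ ?_
  rw [← Nat.card_prod]
  refine Nat.card_congr <| (Equiv.subtypeEquivRight fun p ↦ ?_).trans Equiv.subtypeProdEquivProd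
  constructor
  · rintro ⟨⟨hP, hQ⟩, rfl⟩
    exact ⟨⟨hP, rfl⟩, hQ⟩
  · rintro ⟨⟨hP, rfl⟩, hQ⟩
    exact ⟨⟨hP, hQ⟩, rfl⟩

theorem Matrix.trace_submatrix_pow_equiv {ι κ R : Type*} [Fintype ι] [Fintype κ] [DecidableEq ι]
    [DecidableEq κ] [Semiring R] (A : Matrix κ κ R) (e : ι ≃ κ) (k : ℕ) :
    trace (A.submatrix e e ^ k) = trace (A ^ k) := by
  have h := map_pow (reindexAlgEquiv ℕ R e.symm) A k
  simp only [coe_reindexAlgEquiv, reindex_apply, Equiv.symm_symm] at h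
  rw [← h, trace, trace]
  exact e.sum_comp fun i ↦ (A ^ k) i i

section TransferMatrix

variable {X σ : Type*}

noncomputable def transferMatrix (top bot : X → σ) (ok : X → Prop) : Matrix σ σ ℕ :=
  of fun s t ↦ Nat.card {x : X // ok x ∧ top x = s ∧ bot x = t}

def IsTileChain {n : ℕ} (top bot : X → σ) (c : Fin (n + 1) → X) : Prop :=
  ∀ r : Fin n, bot (c r.castSucc) = top (c r.succ)

def IsClosedTileChain {n : ℕ} (top bot : X → σ) (c : Fin (n + 1) → X) : Prop :=
  IsTileChain top bot c ∧ top (c 0) = bot (c (Fin.last n))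

theorem isTileChain_cons {n : ℕ} {top bot : X → σ} {x : X} {c : Fin (n + 1) → X} :
    IsTileChain top bot (Fin.cons x c : Fin (n + 2) → X) ↔
      bot x = top (c 0) ∧ IsTileChain top bot c := by
  simp only [IsTileChain, Fin.forall_fin_succ, Fin.castSucc_zero, Fin.cons_zero,
    ← Fin.succ_castSucc, Fin.cons_succ]

theorem forall_isClosedTileChain_iff {ι : Type*} {n : ℕ} (top bot : X → σ)
    (M : ι → Fin (n + 1) → X) :
    (∀ i, IsClosedTileChain top bot (M i)) ↔
      IsClosedTileChain (top ∘ ·) (bot ∘ ·) (fun j i ↦ M i j) := by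
  simp only [IsClosedTileChain, IsTileChain, funext_iff, Function.comp_apply, forall_and]
  rw [forall_comm]

variable [Finite X] [Fintype σ] [DecidableEq σ]

theorem card_tileChain_eq_prod {n : ℕ} (top bot : X → σ) (ok : Fin (n + 1) → X → Prop)
    (s t : σ) :
    Nat.card {c : Fin (n + 1) → X //
        (∀ r, ok r (c r)) ∧ IsTileChain top bot c ∧ top (c 0) = s ∧ bot (c (Fin.last n)) = t} =
      (List.ofFn fun r ↦ transferMatrix top bot (ok r)).prod s t := by
  induction n generalizing s with
  | zero =>
    simp only [List.ofFn_succ, List.ofFn_zero, List.prod_singleton, transferMatrix, of_apply]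
    refine Nat.card_congr <| (Equiv.funUnique (Fin 1) X).subtypeEquiv fun c ↦ ?_
    simp [IsTileChain, Fin.forall_fin_one, Fin.last]
  | succ n ih =>
    rw [List.ofFn_succ, List.prod_cons, mul_apply]
    have first_tile (u : σ) : transferMatrix top bot (ok 0) s u =
        Nat.card {x // (ok 0 x ∧ top x = s) ∧ bot x = u} := by
      simp only [transferMatrix, of_apply, and_assoc]
    simp only [first_tile, ← ih fun r ↦ ok r.succ]
    rw [← Nat.card_subtype_prod_eq_sum_mul (fun x ↦ ok 0 x ∧ top x = s) bot]
    refine Nat.card_congr <| ((Fin.consEquiv fun _ ↦ X).subtypeEquiv fun ⟨x, c⟩ ↦ ?_).symm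
    have cons_eq : (Fin.consEquiv fun _ ↦ X) (x, c) = Fin.cons x c := rfl
    rw [cons_eq, isTileChain_cons, ← Fin.succ_last]
    simp only [Fin.forall_fin_succ, Fin.cons_zero, Fin.cons_succ]
    tauto

theorem card_closedTileChain_eq_trace {n : ℕ} (top bot : X → σ) (ok : Fin (n + 1) → X → Prop) :
    Nat.card {c : Fin (n + 1) → X // (∀ r, ok r (c r)) ∧ IsClosedTileChain top bot c} =
      trace (List.ofFn fun r ↦ transferMatrix top bot (ok r)).prod := by
  rw [Nat.card_subtype_eq_sum_card_fiber _ fun c ↦ top (c 0), trace]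
  refine Finset.sum_congr rfl fun s _ ↦ ?_
  rw [diag_apply, ← card_tileChain_eq_prod]
  refine Nat.card_congr (Equiv.subtypeEquivRight fun c ↦ ?_)
  constructor
  · rintro ⟨⟨hok, hchain, hclosed⟩, rfl⟩
    exact ⟨hok, hchain, rfl, hclosed.symm⟩
  · rintro ⟨hok, hchain, rfl, hclosed⟩
    exact ⟨⟨hok, hchain, hclosed.symm⟩, rfl⟩

end TransferMatrix

noncomputable def tileMatrix (l r : Bool) : Matrix Bool Bool ℕ :=
  transferMatrix cpT cpB fun x ↦ cpL x = l ∧ cpR x = r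

-- The `4` counts the tiles `T_7, …, T_10`, which connect on all four edges.
theorem tileMatrix_apply (l r u v : Bool) :
    tileMatrix l r u v =
      if (l != r) = (u != v) then (if l && r && u && v then 4 else 1) else 0 := by
  rw [tileMatrix, transferMatrix, of_apply, Nat.card_eq_fintype_card, Fintype.card_subtype]
  cases l <;> cases r <;> cases u <;> cases v <;> decide

theorem mul_tileMatrix_apply (P : Matrix Bool Bool ℕ) (l r u v : Bool) :
    (P * tileMatrix l r) u v = if l = r then P u v * (if l && v then 4 else 1) else P u (!v) := by
  rw [mul_apply, Fintype.sum_bool]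
  simp only [tileMatrix_apply]
  cases l <;> cases r <;> cases v <;> simp

noncomputable def columnTransfer (m a b : ℕ) : Matrix Bool Bool ℕ :=
  (List.ofFn fun r : Fin m ↦ tileMatrix (a.testBit r) (b.testBit r)).prod

theorem columnTransfer_succ (m a b : ℕ) :
    columnTransfer (m + 1) a b =
      columnTransfer m (a % 2 ^ m) (b % 2 ^ m) * tileMatrix (a.testBit m) (b.testBit m) := by
  rw [columnTransfer, List.ofFn_succ', List.prod_concat, columnTransfer]
  simp [Nat.testBit_mod_two_pow]

-- The block of `X_{k+1}^±`, `O_{k+1}^±` is selected by the most significant bits, i.e. by the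
-- states of the last row, whose tile matrix multiplies on the right.
theorem matsPM_eq_columnTransfer (m a b : ℕ) :
    matsPM m a b = (columnTransfer m a b false false, columnTransfer m a b true false,
      columnTransfer m a b true true, columnTransfer m a b false true) := by
  induction m generalizing a b with
  | zero => simp [matsPM, columnTransfer, one_apply]
  | succ m ih =>
    simp only [matsPM, ih, columnTransfer_succ, mul_tileMatrix_apply,
      Nat.testBit_eq_decide_div_mod_eq]
    rcases Nat.mod_two_eq_zero_or_one (a / 2 ^ m) with ha | ha <;>
      rcases Nat.mod_two_eq_zero_or_one (b / 2 ^ m) with hb | hb <;>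
      simp [ha, hb, mul_comm]

theorem Xplus_add_Oplus_apply (m : ℕ) (a b : Fin (2 ^ m)) :
    (Xplus m + Oplus m) a b = trace (columnTransfer m a b) := by
  simp [Xplus, Oplus, matsPM_eq_columnTransfer, trace, add_comm]

noncomputable def columnMatrix (m : ℕ) : Matrix (Fin (m + 1) → Bool) (Fin (m + 1) → Bool) ℕ :=
  transferMatrix (cpL ∘ ·) (cpR ∘ ·) (IsClosedTileChain cpT cpB)

theorem columnMatrix_apply (m : ℕ) (a b : Fin (m + 1) → Bool) :
    columnMatrix m a b = trace (List.ofFn fun r ↦ tileMatrix (a r) (b r)).prod := by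
  rw [columnMatrix, transferMatrix, of_apply]
  refine (Nat.card_congr (Equiv.subtypeEquivRight fun c ↦ ?_)).trans
    (card_closedTileChain_eq_trace cpT cpB fun r x ↦ cpL x = a r ∧ cpR x = b r)
  simp only [funext_iff, Function.comp_apply, forall_and]
  tauto

noncomputable def stateEquiv (m : ℕ) : Fin (2 ^ m) ≃ (Fin m → Bool) :=
  Equiv.ofBijective stateOf <| by
    refine (Fintype.bijective_iff_injective_and_card _).2 ⟨fun a b h ↦ ?_, by simp⟩
    refine Fin.ext <| Nat.eq_of_testBit_eq fun i ↦ ?_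
    by_cases hi : i < m
    · exact congrFun h ⟨i, hi⟩
    · have : 2 ^ m ≤ 2 ^ i := Nat.pow_le_pow_right two_pos (not_lt.1 hi)
      rw [Nat.testBit_lt_two_pow (a.isLt.trans_le this),
        Nat.testBit_lt_two_pow (b.isLt.trans_le this)]

theorem Xplus_add_Oplus_eq_submatrix (m : ℕ) :
    Xplus (m + 1) + Oplus (m + 1) = (columnMatrix m).submatrix (stateEquiv _) (stateEquiv _) := by
  ext a b
  rw [Xplus_add_Oplus_apply, submatrix_apply, columnMatrix_apply]
  rfl

theorem periodKnot_iff {m n : ℕ} (M : Mosaic (m + 1) (n + 1)) :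
    PeriodKnot M ↔
      (∀ i, IsClosedTileChain cpL cpR (M i)) ∧ ∀ j, IsClosedTileChain cpT cpB (M · j) := by
  constructor
  · rintro ⟨⟨horiz, vert⟩, horizBdry, vertBdry⟩
    exact ⟨fun i ↦ ⟨fun j ↦ horiz i j.castSucc j.succ.isLt, horizBdry i 0 (Fin.last n) rfl rfl⟩,
      fun j ↦ ⟨fun i ↦ vert i.castSucc i.succ.isLt j, vertBdry 0 (Fin.last m) j rfl rfl⟩⟩
  · rintro ⟨rows, cols⟩
    refine ⟨⟨fun i j h ↦ (rows i).1 ⟨j, by omega⟩, fun i h j ↦ (cols j).1 ⟨i, by omega⟩⟩,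
      fun i j j' hj hj' ↦ ?_, fun i i' j hi hi' ↦ ?_⟩
    · obtain rfl : j = 0 := Fin.ext hj
      obtain rfl : j' = Fin.last n := Fin.ext hj'
      exact (rows i).2
    · obtain rfl : i = 0 := Fin.ext hi
      obtain rfl : i' = Fin.last m := Fin.ext hi'
      exact (cols j).2

theorem DP_succ_eq_trace_columnMatrix_pow (m n : ℕ) :
    DP (m + 1) (n + 1) = trace (columnMatrix m ^ (n + 1)) := by
  rw [← List.prod_replicate, ← List.ofFn_const, columnMatrix,
    ← card_closedTileChain_eq_trace _ _ fun _ ↦ IsClosedTileChain cpT cpB, DP]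
  refine Nat.card_congr <| (Equiv.piComm _).subtypeEquiv fun M ↦ ?_
  rw [periodKnot_iff, forall_isClosedTileChain_iff, and_comm]
  rfl

/-- For all positive integers `m` and `n`,
`D_P^{(m,n)} = tr((X_m^+ + O_m^+)^n)`. -/
theorem period_knot_mosaic_enumeration (m n : ℕ) (hm : 0 < m) (hn : 0 < n) :
    DP m n = Matrix.trace ((Xplus m + Oplus m) ^ n) := by
  obtain ⟨m, rfl⟩ := Nat.exists_eq_add_one_of_ne_zero hm.ne'
  obtain ⟨n, rfl⟩ := Nat.exists_eq_add_one_of_ne_zero hn.ne'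
  rw [Xplus_add_Oplus_eq_submatrix, trace_submatrix_pow_equiv, DP_succ_eq_trace_columnMatrix_pow]
end

section
/- For positive co-prime integers m and n, the number of toroidal knot (m,n)-mosaics satisfies D_T^{(m,n)} = Σ_{p|m, q|n} d_{p,q}/(p·q), where the sum runs over all positive divisors p of m and q of n (in particular each d_{p,q} appearing is divisible by p·q). -/
/-!
The rotations `t_{x,y}` form an action of `ℤ × ℤ` on period knot mosaics, and toroidal knot
mosaics are its orbits. The stabilizer `S` of a mosaic contains `(m, 0)` and `(0, n)`; since `m`
and `n` are coprime, Bézout gives `S = pℤ × qℤ`, where `p` and `q` are the least periods along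
the two axes. So the orbit of a `(p,q)`-f.period mosaic has `[ℤ² : S] = p q` elements, all
`(p,q)`-f.period, and `d_{p,q}` is `p q` times the number of such orbits. Summing over the
possible periods `p ∣ m`, `q ∣ n` counts all orbits.
-/

open AddAction

theorem Int.isLeast_index (H : AddSubgroup ℤ) (hH : H.index ≠ 0) :
    IsLeast {a : ℕ | 0 < a ∧ (a : ℤ) ∈ H} H.index := by
  obtain ⟨g, rfl⟩ := Int.subgroup_cyclic H
  rw [← AddSubgroup.zmultiples_eq_closure, Int.index_zmultiples] at *
  simp only [Int.mem_zmultiples_iff, Int.dvd_natCast]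
  exact ⟨⟨Nat.pos_of_ne_zero hH, dvd_rfl⟩, fun a ha => Nat.le_of_dvd ha.1 ha.2⟩

theorem Int.index_dvd_of_mem {H : AddSubgroup ℤ} {m : ℕ} (hm : (m : ℤ) ∈ H) :
    H.index ∣ m := by
  simpa using AddSubgroup.index_dvd_of_le (AddSubgroup.zmultiples_le_of_mem hm)

theorem AddSubgroup.prod_comap_inl_comap_inr_eq (S : AddSubgroup (ℤ × ℤ)) {m n : ℤ}
    (hco : IsCoprime m n) (hm : (m, 0) ∈ S) (hn : (0, n) ∈ S) :
    (S.comap (AddMonoidHom.inl ℤ ℤ)).prod (S.comap (AddMonoidHom.inr ℤ ℤ)) = S := by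
  refine le_antisymm (fun z hz => ?_) fun z hz => ?_
  · simpa using S.add_mem hz.1 hz.2
  · obtain ⟨u, v, huv⟩ := hco
    have hx : (z.1, 0) ∈ S := by
      have bezout :
          ((z.1, 0) : ℤ × ℤ) = (u * z.1) • (m, 0) + v • (n • z - z.2 • (0, n)) :=
        Prod.ext (by simp; linear_combination (-z.1) * huv) (by simp [mul_comm])
      rw [bezout]
      exact S.add_mem (S.zsmul_mem hm _)
        (S.zsmul_mem (S.sub_mem (S.zsmul_mem hz n) (S.zsmul_mem hn _)) v)
    have hy : ((0, z.2) : ℤ × ℤ) = z - (z.1, 0) := by ext <;> simp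
    exact ⟨hx, show (0, z.2) ∈ S from hy ▸ S.sub_mem hz hx⟩

-- The index of a subgroup of `ℤ` is its least positive element (`Int.isLeast_index`), so these
-- are the least periods of `S` along the two axes.
noncomputable def AddSubgroup.axisIndices (S : AddSubgroup (ℤ × ℤ)) : ℕ × ℕ :=
  ((S.comap (AddMonoidHom.inl ℤ ℤ)).index, (S.comap (AddMonoidHom.inr ℤ ℤ)).index)

theorem AddSubgroup.index_eq_axisIndices_mul (S : AddSubgroup (ℤ × ℤ)) {m n : ℤ}
    (hco : IsCoprime m n) (hm : (m, 0) ∈ S) (hn : (0, n) ∈ S) :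
    S.index = S.axisIndices.1 * S.axisIndices.2 :=
  (congrArg AddSubgroup.index (S.prod_comap_inl_comap_inr_eq hco hm hn)).symm.trans
    (AddSubgroup.index_prod _ _)

def AddAction.orbitRel.Quotient.stabilizer {G α : Type*} [AddCommGroup G] [AddAction G α] :
    orbitRel.Quotient G α → AddSubgroup G :=
  Quotient.lift (AddAction.stabilizer G) fun _ b hab => by
    obtain ⟨g, rfl⟩ := hab
    exact stabilizer_vadd_eq_right g b

theorem AddAction.card_subtype_mk_eq_mul {G α β : Type*} [AddGroup G] [AddAction G α] [Finite α]
    (f : orbitRel.Quotient G α → β) (w : β → ℕ)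
    (hw : ∀ a, (orbit G a).ncard = w (f ⟦a⟧)) (b : β) :
    Nat.card {a : α // f ⟦a⟧ = b} = w b * Nat.card {ω // f ω = b} := by
  classical
  have := Fintype.ofFinite (orbitRel.Quotient G α)
  have hfiber (ω : orbitRel.Quotient G α) : Nat.card {a : α // ⟦a⟧ = ω} = w (f ω) := by
    induction ω using Quotient.inductionOn with | h a₀ =>
    rw [← hw, ← Nat.card_coe_set_eq]
    exact Nat.card_congr (Equiv.subtypeEquivRight fun a => Quotient.eq.trans orbitRel_apply)
  calc Nat.card {a : α // f ⟦a⟧ = b}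
      = Nat.card (Σ ω : {ω // f ω = b}, {a : α // ⟦a⟧ = ω.1}) :=
        Nat.card_congr (Equiv.sigmaSubtypeFiberEquivSubtype (Quotient.mk _) (q := (f · = b))
          fun _ => Iff.rfl).symm
    _ = ∑ ω : {ω // f ω = b}, w b := by
        rw [Nat.card_sigma]
        exact Finset.sum_congr rfl fun ω _ => (hfiber ω).trans (congrArg w ω.2)
    _ = w b * Nat.card {ω // f ω = b} := by simp [mul_comm]

theorem Nat.card_eq_sum_card_fiber {α β : Type*} [Finite α] (f : α → β)
    (t : Finset β) (hf : ∀ a, f a ∈ t) :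
    Nat.card α = ∑ b ∈ t, Nat.card {a // f a = b} := by
  classical
  have := Fintype.ofFinite α
  simp only [Nat.card_eq_fintype_card, Fintype.card_subtype]
  exact Finset.card_eq_sum_card_fiberwise fun a _ => hf a

section Shift

variable {m n : ℕ}

theorem coe_shiftIdx (x : ℤ) (i : Fin m) : ((shiftIdx x i : ℕ) : ℤ) = ((i : ℤ) - x) % m :=
  Int.toNat_of_nonneg (Int.emod_nonneg _ (by exact_mod_cast i.pos.ne'))

theorem shiftIdx_add (x y : ℤ) (i : Fin m) :
    shiftIdx (x + y) i = shiftIdx x (shiftIdx y i) := by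
  refine Fin.ext (Nat.cast_injective (R := ℤ) ?_)
  rw [coe_shiftIdx, coe_shiftIdx, coe_shiftIdx, Int.emod_sub_emod, sub_sub, add_comm y]

theorem shiftIdx_zero (i : Fin m) : shiftIdx 0 i = i := by
  refine Fin.ext (Nat.cast_injective (R := ℤ) ?_)
  rw [coe_shiftIdx, sub_zero, Int.emod_eq_of_lt (by positivity) (by exact_mod_cast i.isLt)]

theorem shiftIdx_natCast_self (i : Fin m) : shiftIdx (m : ℤ) i = i := by
  refine Fin.ext (Nat.cast_injective (R := ℤ) ?_)
  rw [coe_shiftIdx, Int.sub_emod_right,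
    Int.emod_eq_of_lt (by positivity) (by exact_mod_cast i.isLt)]

theorem coe_shiftIdx_neg_one (j : Fin n) : (shiftIdx (-1) j : ℕ) = (j + 1) % n := by
  apply Nat.cast_injective (R := ℤ)
  rw [coe_shiftIdx, sub_neg_eq_add]
  push_cast
  rfl

theorem forall_shiftIdx_neg_one_iff (R : Fin n → Fin n → Prop) :
    (∀ j, R j (shiftIdx (-1) j)) ↔
      (∀ j (h : j.val + 1 < n), R j ⟨j + 1, h⟩) ∧
        ∀ j j' : Fin n, j.val = 0 → j'.val = n - 1 → R j' j := by
  have succ_of_lt (j : Fin n) (h : j.val + 1 < n) : shiftIdx (-1) j = ⟨j + 1, h⟩ :=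
    Fin.ext ((coe_shiftIdx_neg_one j).trans (Nat.mod_eq_of_lt h))
  have succ_of_last (j j' : Fin n) (hj : j.val = 0) (hj' : j'.val = n - 1) :
      shiftIdx (-1) j' = j := by
    ext
    rw [coe_shiftIdx_neg_one, hj, hj', Nat.sub_add_cancel j.pos, Nat.mod_self]
  refine ⟨fun hR => ⟨fun j h => succ_of_lt j h ▸ hR j, fun j j' hj hj' => ?_⟩,
    fun ⟨hR, hR'⟩ j => ?_⟩
  · exact succ_of_last j j' hj hj' ▸ hR j'
  · by_cases h : j.val + 1 < n
    · exact succ_of_lt j h ▸ hR j h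
    · have hj : j.val = n - 1 := by omega
      exact succ_of_last ⟨0, j.pos⟩ j rfl hj ▸ hR' _ j rfl hj

theorem tshift_add (x y x' y' : ℤ) (M : Mosaic m n) :
    tshift (x + x') (y + y') M = tshift x y (tshift x' y' M) := by
  funext i j
  simp only [tshift, add_comm x, add_comm y, shiftIdx_add]

theorem tshift_zero (M : Mosaic m n) : tshift 0 0 M = M := by
  funext i j
  simp only [tshift, shiftIdx_zero]

theorem periodKnot_iff_cyclic (M : Mosaic m n) :
    PeriodKnot M ↔ (∀ i j, cpR (M i j) = cpL (M i (shiftIdx (-1) j))) ∧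
      ∀ i j, cpB (M i j) = cpT (M (shiftIdx (-1) i) j) := by
  have rows (i : Fin m) := forall_shiftIdx_neg_one_iff fun j j' => cpR (M i j) = cpL (M i j')
  have cols (j : Fin n) := forall_shiftIdx_neg_one_iff fun i i' => cpB (M i j) = cpT (M i' j)
  rw [forall_congr' rows, forall_and, forall_comm.trans ((forall_congr' cols).trans forall_and)]
  unfold PeriodKnot SuitablyConnected SuitablyBdryConnected
  constructor
  · rintro ⟨⟨h1, h2⟩, h3, h4⟩
    exact ⟨⟨h1, fun i j j' hj hj' => (h3 i j j' hj hj').symm⟩, fun j i h => h2 i h j,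
      fun j i i' hi hi' => (h4 i i' j hi hi').symm⟩
  · rintro ⟨⟨h1, h3⟩, h2, h4⟩
    exact ⟨⟨h1, fun i h j => h2 j i h⟩, fun i j j' hj hj' => (h3 i j j' hj hj').symm,
      fun i i' j hi hi' => (h4 j i i' hi hi').symm⟩

theorem PeriodKnot.tshift {M : Mosaic m n} (hM : PeriodKnot M) (x y : ℤ) :
    PeriodKnot (tshift x y M) := by
  have shiftIdx_comm (z : ℤ) {k : ℕ} (i : Fin k) :
      shiftIdx z (shiftIdx (-1) i) = shiftIdx (-1) (shiftIdx z i) := by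
    rw [← shiftIdx_add, ← shiftIdx_add, add_comm]
  rw [periodKnot_iff_cyclic] at hM ⊢
  exact ⟨fun i j => by simp only [_root_.tshift, shiftIdx_comm]; exact hM.1 _ _,
    fun i j => by simp only [_root_.tshift, shiftIdx_comm]; exact hM.2 _ _⟩

end Shift

section Action

variable {m n : ℕ}

instance : AddAction (ℤ × ℤ) {M : Mosaic m n // PeriodKnot M} where
  vadd g M := ⟨tshift g.1 g.2 M, M.2.tshift g.1 g.2⟩
  zero_vadd M := Subtype.ext (tshift_zero M.1)
  add_vadd _ _ M := Subtype.ext (tshift_add _ _ _ _ M.1)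

theorem mem_stabilizer_iff_tshift {A : {M : Mosaic m n // PeriodKnot M}} {g : ℤ × ℤ} :
    g ∈ stabilizer (ℤ × ℤ) A ↔ tshift g.1 g.2 A.1 = A.1 :=
  Subtype.ext_iff

theorem natCast_inl_mem_stabilizer (A : {M : Mosaic m n // PeriodKnot M}) :
    ((m : ℤ), (0 : ℤ)) ∈ stabilizer (ℤ × ℤ) A := by
  rw [mem_stabilizer_iff_tshift]
  funext i j
  simp only [tshift, shiftIdx_natCast_self, shiftIdx_zero]

theorem natCast_inr_mem_stabilizer (A : {M : Mosaic m n // PeriodKnot M}) :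
    ((0 : ℤ), (n : ℤ)) ∈ stabilizer (ℤ × ℤ) A := by
  rw [mem_stabilizer_iff_tshift]
  funext i j
  simp only [tshift, shiftIdx_natCast_self, shiftIdx_zero]

theorem axisIndices_stabilizer_mem_divisors (hm : 0 < m) (hn : 0 < n)
    (A : {M : Mosaic m n // PeriodKnot M}) :
    (stabilizer (ℤ × ℤ) A).axisIndices ∈ m.divisors ×ˢ n.divisors :=
  Finset.mem_product.mpr
    ⟨Nat.mem_divisors.mpr ⟨Int.index_dvd_of_mem (natCast_inl_mem_stabilizer A), hm.ne'⟩,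
      Nat.mem_divisors.mpr ⟨Int.index_dvd_of_mem (natCast_inr_mem_stabilizer A), hn.ne'⟩⟩

theorem isFPeriod_iff_axisIndices (hm : 0 < m) (hn : 0 < n) {p q : ℕ}
    (A : {M : Mosaic m n // PeriodKnot M}) :
    IsFPeriod p q A.1 ↔ (stabilizer (ℤ × ℤ) A).axisIndices = (p, q) := by
  have hmem := Finset.mem_product.mp (axisIndices_stabilizer_mem_divisors hm hn A)
  have hrow := Int.isLeast_index _ (Nat.pos_of_mem_divisors hmem.1).ne'
  have hcol := Int.isLeast_index _ (Nat.pos_of_mem_divisors hmem.2).ne'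
  simp only [AddSubgroup.mem_comap, AddMonoidHom.inl_apply, AddMonoidHom.inr_apply,
    mem_stabilizer_iff_tshift, eq_comm (b := A.1)] at hrow hcol
  exact ⟨fun h => Prod.ext (hrow.unique h.1) (hcol.unique h.2), fun h => by
    obtain ⟨rfl, rfl⟩ := Prod.ext_iff.mp h
    exact ⟨hrow, hcol⟩⟩

theorem ncard_orbit_eq_axisIndices_mul (hco : m.Coprime n) (A : {M : Mosaic m n // PeriodKnot M}) :
    (orbit (ℤ × ℤ) A).ncard =
      (stabilizer (ℤ × ℤ) A).axisIndices.1 * (stabilizer (ℤ × ℤ) A).axisIndices.2 := by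
  rw [← index_stabilizer, AddSubgroup.index_eq_axisIndices_mul _
    (Nat.isCoprime_iff_coprime.mpr hco) (natCast_inl_mem_stabilizer A)
    (natCast_inr_mem_stabilizer A)]

theorem dFP_eq_card (hm : 0 < m) (hn : 0 < n) (p q : ℕ) :
    dFP m n p q = Nat.card {A : {M : Mosaic m n // PeriodKnot M} //
      (orbitRel.Quotient.stabilizer ⟦A⟧).axisIndices = (p, q)} :=
  Nat.card_congr ((Equiv.subtypeSubtypeEquivSubtypeInter _ _).symm.trans
    (Equiv.subtypeEquivRight fun A => isFPeriod_iff_axisIndices hm hn A))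

theorem DT_eq_card :
    DT m n = Nat.card (orbitRel.Quotient (ℤ × ℤ) {M : Mosaic m n // PeriodKnot M}) :=
  Nat.card_congr (Quot.congrRight fun A B => by
    rw [orbitRel_apply, mem_orbit_symm]
    exact ⟨fun ⟨x, y, h⟩ => ⟨(x, y), Subtype.ext h⟩,
      fun ⟨g, h⟩ => ⟨g.1, g.2, congrArg Subtype.val h⟩⟩)

end Action

/-- For positive co-prime integers `m` and `n`,
`D_T^{(m,n)} = Σ_{p|m, q|n} d_{p,q}/(p·q)`; in particular each `d_{p,q}` appearing is
divisible by `p·q`. -/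
theorem toroidal_knot_mosaic_enumeration (m n : ℕ) (hm : 0 < m) (hn : 0 < n)
    (hco : Nat.Coprime m n) :
    (∀ p ∈ m.divisors, ∀ q ∈ n.divisors, p * q ∣ dFP m n p q) ∧
    DT m n = ∑ p ∈ m.divisors, ∑ q ∈ n.divisors, dFP m n p q / (p * q) := by
  set periods : orbitRel.Quotient (ℤ × ℤ) {M : Mosaic m n // PeriodKnot M} → ℕ × ℕ :=
    fun ω => (orbitRel.Quotient.stabilizer ω).axisIndices
  have hdFP (p q : ℕ) : dFP m n p q = p * q * Nat.card {ω // periods ω = (p, q)} := by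
    rw [dFP_eq_card hm hn,
      card_subtype_mk_eq_mul periods (fun z => z.1 * z.2) (ncard_orbit_eq_axisIndices_mul hco)]
  have hDT : DT m n = ∑ z ∈ m.divisors ×ˢ n.divisors, Nat.card {ω // periods ω = z} := by
    rw [DT_eq_card, Nat.card_eq_sum_card_fiber periods]
    rintro ⟨A⟩
    exact axisIndices_stabilizer_mem_divisors hm hn A
  refine ⟨fun p _ q _ => hdFP p q ▸ dvd_mul_right _ _, ?_⟩
  rw [hDT, Finset.sum_product]
  refine Finset.sum_congr rfl fun p hp => Finset.sum_congr rfl fun q hq => ?_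
  rw [hdFP, Nat.mul_div_cancel_left _
    (Nat.mul_pos (Nat.pos_of_mem_divisors hp) (Nat.pos_of_mem_divisors hq))]
end

section
/- Let m, n be positive integers, let p divide m and q divide n, and let r divide p and s divide q. Then the number of (r,s)-f.period knot (m,n)-mosaics equals the number of (r,s)-f.period knot (p,q)-mosaics; indeed, every (p,q)-f.period knot (m,n)-mosaic is obtained by tiling the m×n array with (m/p)×(n/q) copies of a unique period knot (p,q)-mosaic. -/
namespace FPAux

lemma shiftIdx_val_int {m : ℕ} (x : ℤ) (i : Fin m) :
    (((shiftIdx x i).val : ℤ)) = ((i.val : ℤ) - x) % (m : ℤ) := by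
  have hm : (0:ℤ) < (m:ℤ) := by exact_mod_cast i.pos
  simp only [shiftIdx]
  exact Int.toNat_of_nonneg (Int.emod_nonneg _ (by omega))

lemma sub_emod_congr {a b x n : ℤ} (h : a % n = b % n) : (a - x) % n = (b - x) % n := by
  rw [Int.sub_emod, h, ← Int.sub_emod]

lemma shiftIdx_comp {m : ℕ} (x y : ℤ) (i : Fin m) :
    shiftIdx x (shiftIdx y i) = shiftIdx (y + x) i := by
  apply Fin.ext
  have h1 := shiftIdx_val_int x (shiftIdx y i)
  have h2 := shiftIdx_val_int y i
  have h3 := shiftIdx_val_int (y + x) i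
  have : (((shiftIdx x (shiftIdx y i)).val : ℤ)) = ((shiftIdx (y+x) i).val : ℤ) := by
    rw [h1, h3, h2]
    have := sub_emod_congr (x := x) (n := (m:ℤ)) (Int.emod_emod_of_dvd ((i.val:ℤ) - y) dvd_rfl)
    rw [this]
    ring_nf
  exact_mod_cast this

lemma shiftIdx_zero {m : ℕ} (i : Fin m) : shiftIdx 0 i = i := by
  apply Fin.ext
  have h := shiftIdx_val_int 0 i
  have h2 : ((i.val:ℤ) - 0) % (m:ℤ) = (i.val:ℤ) := by
    rw [sub_zero]
    exact Int.emod_eq_of_lt (by positivity) (by exact_mod_cast i.isLt)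
  rw [h2] at h
  exact_mod_cast h

lemma tshift_comp {m n : ℕ} (x y x' y' : ℤ) (M : Mosaic m n) :
    tshift x y (tshift x' y' M) = tshift (x + x') (y + y') M := by
  funext i j
  simp [tshift, shiftIdx_comp, add_comm]

lemma tshift_zero {m n : ℕ} (M : Mosaic m n) : tshift 0 0 M = M := by
  funext i j
  simp [tshift, shiftIdx_zero]

lemma row_mul {m n : ℕ} (M : Mosaic m n) (r : ℕ) (h : M = tshift (r:ℤ) 0 M) (c : ℕ) :
    M = tshift ((r * c : ℕ) : ℤ) 0 M := by
  induction c with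
  | zero => simpa using (tshift_zero M).symm
  | succ c ih =>
      have he : ((r * (c+1) : ℕ) : ℤ) = (r:ℤ) + ((r * c : ℕ) : ℤ) := by push_cast; ring
      rw [he]
      calc M = tshift (r:ℤ) 0 M := h
        _ = tshift (r:ℤ) 0 (tshift ((r*c:ℕ):ℤ) 0 M) := by rw [← ih]
        _ = tshift ((r:ℤ) + ((r*c:ℕ):ℤ)) 0 M := by rw [tshift_comp]; norm_num

lemma col_mul {m n : ℕ} (M : Mosaic m n) (s : ℕ) (h : M = tshift 0 (s:ℤ) M) (c : ℕ) :
    M = tshift 0 ((s * c : ℕ) : ℤ) M := by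
  induction c with
  | zero => simpa using (tshift_zero M).symm
  | succ c ih =>
      have he : ((s * (c+1) : ℕ) : ℤ) = (s:ℤ) + ((s * c : ℕ) : ℤ) := by push_cast; ring
      rw [he]
      calc M = tshift 0 (s:ℤ) M := h
        _ = tshift 0 (s:ℤ) (tshift 0 ((s*c:ℕ):ℤ) M) := by rw [← ih]
        _ = tshift 0 ((s:ℤ) + ((s*c:ℕ):ℤ)) M := by rw [tshift_comp]; norm_num

/-- Index reduction map. -/
def tileIdx {m p : ℕ} (hp0 : 0 < p) (i : Fin m) : Fin p := ⟨i.val % p, Nat.mod_lt _ hp0⟩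

lemma shiftIdx_val_mod {m p : ℕ} (hp : p ∣ m) (hp0 : 0 < p) (x : ℤ) (i : Fin m) :
    (shiftIdx x i).val % p = (shiftIdx x (tileIdx (m := m) hp0 i)).val := by
  have hd : (p:ℤ) ∣ (m:ℤ) := by exact_mod_cast hp
  have h1 := shiftIdx_val_int x i
  have h2 := shiftIdx_val_int x (tileIdx (m := m) hp0 i)
  have key : (((shiftIdx x i).val % p : ℕ) : ℤ) = ((shiftIdx x (tileIdx (m := m) hp0 i)).val : ℤ) := by
    push_cast
    rw [h1, h2]
    rw [Int.emod_emod_of_dvd _ hd]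
    have hv : ((tileIdx (m := m) hp0 i).val : ℤ) % (p:ℤ) = (i.val : ℤ) % (p:ℤ) := by
      show ((i.val % p : ℕ) : ℤ) % (p:ℤ) = _
      push_cast
      rw [Int.emod_emod_of_dvd _ dvd_rfl]
    exact sub_emod_congr hv.symm
  exact_mod_cast key

end FPAux
namespace FPAux

lemma key_row {m p : ℕ} (hp0 : 0 < p) (hpm : p ≤ m) (i : Fin m) :
    shiftIdx ((p * (i.val / p) : ℕ) : ℤ) i
      = (⟨i.val % p, lt_of_lt_of_le (Nat.mod_lt _ hp0) hpm⟩ : Fin m) := by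
  apply Fin.ext
  have h1 := shiftIdx_val_int ((p * (i.val / p) : ℕ) : ℤ) i
  obtain ⟨d, hd1, hd2⟩ : ∃ d, i.val % p + d = i.val ∧ p * (i.val / p) = d :=
    ⟨_, Nat.mod_add_div i.val p, rfl⟩
  have hlt : i.val % p < p := Nat.mod_lt _ hp0
  have h2 : (i.val : ℤ) - ((p * (i.val / p) : ℕ) : ℤ) = ((i.val % p : ℕ) : ℤ) := by
    rw [hd2]; omega
  rw [h2] at h1
  have h3 : ((i.val % p : ℕ) : ℤ) % (m : ℤ) = ((i.val % p : ℕ) : ℤ) :=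
    Int.emod_eq_of_lt (by positivity) (by exact_mod_cast lt_of_lt_of_le hlt hpm)
  rw [h3] at h1
  exact_mod_cast h1

lemma tiles_of_periodic {m n p q : ℕ} (hp0 : 0 < p) (hq0 : 0 < q) (hpm : p ≤ m) (hqn : q ≤ n)
    (M : Mosaic m n) (hP : M = tshift (p:ℤ) 0 M) (hQ : M = tshift 0 (q:ℤ) M)
    (i : Fin m) (j : Fin n) :
    M i j = M ⟨i.val % p, lt_of_lt_of_le (Nat.mod_lt _ hp0) hpm⟩
              ⟨j.val % q, lt_of_lt_of_le (Nat.mod_lt _ hq0) hqn⟩ := by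
  have step1 : ∀ (i : Fin m) (j : Fin n),
      M i j = M (⟨i.val % p, lt_of_lt_of_le (Nat.mod_lt _ hp0) hpm⟩ : Fin m) j := by
    intro i j
    conv_lhs => rw [row_mul M p hP (i.val / p)]
    show M (shiftIdx _ i) (shiftIdx 0 j) = _
    rw [key_row hp0 hpm, shiftIdx_zero]
  have key_col : ∀ (j : Fin n), shiftIdx ((q * (j.val / q) : ℕ) : ℤ) j
      = (⟨j.val % q, lt_of_lt_of_le (Nat.mod_lt _ hq0) hqn⟩ : Fin n) := fun j =>
    key_row hq0 hqn j
  have step2 : ∀ (i : Fin m) (j : Fin n),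
      M i j = M i (⟨j.val % q, lt_of_lt_of_le (Nat.mod_lt _ hq0) hqn⟩ : Fin n) := by
    intro i j
    conv_lhs => rw [col_mul M q hQ (j.val / q)]
    show M (shiftIdx 0 i) (shiftIdx _ j) = _
    rw [key_col, shiftIdx_zero]
  rw [step1, step2]

end FPAux
namespace FPAux

lemma pred_mod {q n : ℕ} (hq : q ∣ n) (hn : 0 < n) (hq0 : 0 < q) : (n - 1) % q = q - 1 := by
  obtain ⟨k, rfl⟩ := hq
  have hk : k ≠ 0 := by rintro rfl; simp at hn
  obtain ⟨k', rfl⟩ : ∃ k', k = k' + 1 := ⟨k - 1, by omega⟩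
  have h1 : q * (k' + 1) - 1 = q - 1 + q * k' := by
    have : q * (k' + 1) = q * k' + q := by ring
    omega
  rw [h1, Nat.add_mul_mod_self_left, Nat.mod_eq_of_lt (by omega)]

section Transfer

variable {m n p q : ℕ} {M : Mosaic m n} {K : Mosaic p q}

lemma restrict_eq (hp0 : 0 < p) (hq0 : 0 < q) (hpm : p ≤ m) (hqn : q ≤ n)
    (hT : ∀ i j, M i j = K (tileIdx hp0 i) (tileIdx hq0 j)) (i : Fin p) (j : Fin q) :
    K i j = M ⟨i.val, lt_of_lt_of_le i.isLt hpm⟩ ⟨j.val, lt_of_lt_of_le j.isLt hqn⟩ := by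
  have e1 : tileIdx hp0 (⟨i.val, lt_of_lt_of_le i.isLt hpm⟩ : Fin m) = i :=
    Fin.ext (Nat.mod_eq_of_lt i.isLt)
  have e2 : tileIdx hq0 (⟨j.val, lt_of_lt_of_le j.isLt hqn⟩ : Fin n) = j :=
    Fin.ext (Nat.mod_eq_of_lt j.isLt)
  rw [hT, e1, e2]

lemma tileIdx_shiftIdx (hp : p ∣ m) (hp0 : 0 < p) (x : ℤ) (i : Fin m) :
    tileIdx hp0 (shiftIdx x i) = shiftIdx x (tileIdx hp0 i) :=
  Fin.ext (shiftIdx_val_mod hp hp0 x i)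

lemma shift_row_iff (hp : p ∣ m) (hq : q ∣ n) (hp0 : 0 < p) (hq0 : 0 < q)
    (hpm : p ≤ m) (hqn : q ≤ n)
    (hT : ∀ i j, M i j = K (tileIdx hp0 i) (tileIdx hq0 j)) (x : ℤ) :
    M = tshift x 0 M ↔ K = tshift x 0 K := by
  constructor
  · intro h
    funext i j
    show K i j = K (shiftIdx x i) (shiftIdx 0 j)
    rw [shiftIdx_zero]
    set I : Fin m := ⟨i.val, lt_of_lt_of_le i.isLt hpm⟩ with hI
    set J : Fin n := ⟨j.val, lt_of_lt_of_le j.isLt hqn⟩ with hJ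
    have e1 : tileIdx hp0 I = i := Fin.ext (Nat.mod_eq_of_lt i.isLt)
    have e2 : tileIdx hq0 J = j := Fin.ext (Nat.mod_eq_of_lt j.isLt)
    calc K i j = M I J := restrict_eq hp0 hq0 hpm hqn hT i j
      _ = M (shiftIdx x I) J := by
          conv_lhs => rw [h]
          show M (shiftIdx x I) (shiftIdx 0 J) = _
          rw [shiftIdx_zero]
      _ = K (tileIdx hp0 (shiftIdx x I)) (tileIdx hq0 J) := hT _ _
      _ = K (shiftIdx x i) j := by rw [tileIdx_shiftIdx hp hp0, e1, e2]
  · intro h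
    funext i j
    show M i j = M (shiftIdx x i) (shiftIdx 0 j)
    rw [shiftIdx_zero]
    calc M i j = K (tileIdx hp0 i) (tileIdx hq0 j) := hT i j
      _ = K (shiftIdx x (tileIdx hp0 i)) (tileIdx hq0 j) := by
          conv_lhs => rw [h]
          show K (shiftIdx x (tileIdx hp0 i)) (shiftIdx 0 (tileIdx hq0 j)) = _
          rw [shiftIdx_zero]
      _ = K (tileIdx hp0 (shiftIdx x i)) (tileIdx hq0 j) := by rw [tileIdx_shiftIdx hp hp0]
      _ = M (shiftIdx x i) j := (hT _ _).symm

lemma shift_col_iff (hp : p ∣ m) (hq : q ∣ n) (hp0 : 0 < p) (hq0 : 0 < q)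
    (hpm : p ≤ m) (hqn : q ≤ n)
    (hT : ∀ i j, M i j = K (tileIdx hp0 i) (tileIdx hq0 j)) (y : ℤ) :
    M = tshift 0 y M ↔ K = tshift 0 y K := by
  constructor
  · intro h
    funext i j
    show K i j = K (shiftIdx 0 i) (shiftIdx y j)
    rw [shiftIdx_zero]
    set I : Fin m := ⟨i.val, lt_of_lt_of_le i.isLt hpm⟩ with hI
    set J : Fin n := ⟨j.val, lt_of_lt_of_le j.isLt hqn⟩ with hJ
    have e1 : tileIdx hp0 I = i := Fin.ext (Nat.mod_eq_of_lt i.isLt)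
    have e2 : tileIdx hq0 J = j := Fin.ext (Nat.mod_eq_of_lt j.isLt)
    calc K i j = M I J := restrict_eq hp0 hq0 hpm hqn hT i j
      _ = M I (shiftIdx y J) := by
          conv_lhs => rw [h]
          show M (shiftIdx 0 I) (shiftIdx y J) = _
          rw [shiftIdx_zero]
      _ = K (tileIdx hp0 I) (tileIdx hq0 (shiftIdx y J)) := hT _ _
      _ = K i (shiftIdx y j) := by rw [tileIdx_shiftIdx hq hq0, e1, e2]
  · intro h
    funext i j
    show M i j = M (shiftIdx 0 i) (shiftIdx y j)
    rw [shiftIdx_zero]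
    calc M i j = K (tileIdx hp0 i) (tileIdx hq0 j) := hT i j
      _ = K (tileIdx hp0 i) (shiftIdx y (tileIdx hq0 j)) := by
          conv_lhs => rw [h]
          show K (shiftIdx 0 (tileIdx hp0 i)) (shiftIdx y (tileIdx hq0 j)) = _
          rw [shiftIdx_zero]
      _ = K (tileIdx hp0 i) (tileIdx hq0 (shiftIdx y j)) := by rw [tileIdx_shiftIdx hq hq0]
      _ = M i (shiftIdx y j) := (hT _ _).symm

lemma fper_iff (hp : p ∣ m) (hq : q ∣ n) (hp0 : 0 < p) (hq0 : 0 < q)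
    (hpm : p ≤ m) (hqn : q ≤ n)
    (hT : ∀ i j, M i j = K (tileIdx hp0 i) (tileIdx hq0 j)) (r s : ℕ) :
    IsFPeriod r s M ↔ IsFPeriod r s K := by
  unfold IsFPeriod
  have h1 : {a : ℕ | 0 < a ∧ M = tshift (a:ℤ) 0 M} = {a : ℕ | 0 < a ∧ K = tshift (a:ℤ) 0 K} := by
    ext a
    exact and_congr_right fun _ => shift_row_iff hp hq hp0 hq0 hpm hqn hT _
  have h2 : {b : ℕ | 0 < b ∧ M = tshift 0 (b:ℤ) M} = {b : ℕ | 0 < b ∧ K = tshift 0 (b:ℤ) K} := by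
    ext b
    exact and_congr_right fun _ => shift_col_iff hp hq hp0 hq0 hpm hqn hT _
  rw [h1, h2]

end Transfer

end FPAux
namespace FPAux

section PK

variable {m n p q : ℕ} {M : Mosaic m n} {K : Mosaic p q}

lemma pk_down (hp : p ∣ m) (hq : q ∣ n) (hm : 0 < m) (hn : 0 < n)
    (hp0 : 0 < p) (hq0 : 0 < q) (hpm : p ≤ m) (hqn : q ≤ n)
    (hT : ∀ i j, M i j = K (tileIdx hp0 i) (tileIdx hq0 j))
    (hM : PeriodKnot M) : PeriodKnot K := by
  have hre := restrict_eq hp0 hq0 hpm hqn hT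
  refine ⟨⟨?_, ?_⟩, ?_, ?_⟩
  · intro i j h
    rw [hre i j, hre i ⟨j.val + 1, h⟩]
    exact hM.1.1 _ _ (lt_of_lt_of_le h hqn)
  · intro i h j
    rw [hre i j, hre ⟨i.val + 1, h⟩ j]
    exact hM.1.2 _ (lt_of_lt_of_le h hpm) _
  · intro i j j' hj hj'
    rw [hre i j, hre i j']
    have h1 := hM.2.1 ⟨i.val, lt_of_lt_of_le i.isLt hpm⟩ ⟨j.val, lt_of_lt_of_le j.isLt hqn⟩
      ⟨n - 1, Nat.sub_lt hn one_pos⟩ hj rfl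
    rw [h1, hT]
    have e1 : tileIdx hp0 (⟨i.val, lt_of_lt_of_le i.isLt hpm⟩ : Fin m) = i :=
      Fin.ext (Nat.mod_eq_of_lt i.isLt)
    have e2 : tileIdx hq0 (⟨n - 1, Nat.sub_lt hn one_pos⟩ : Fin n) = j' := by
      apply Fin.ext
      show (n - 1) % q = j'.val
      rw [pred_mod hq hn hq0, hj']
    rw [e1, e2]
    exact congrArg cpR (hre i j')
  · intro i i' j hi hi'
    rw [hre i j, hre i' j]
    have h1 := hM.2.2 ⟨i.val, lt_of_lt_of_le i.isLt hpm⟩ ⟨m - 1, Nat.sub_lt hm one_pos⟩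
      ⟨j.val, lt_of_lt_of_le j.isLt hqn⟩ hi rfl
    rw [h1, hT]
    have e1 : tileIdx hq0 (⟨j.val, lt_of_lt_of_le j.isLt hqn⟩ : Fin n) = j :=
      Fin.ext (Nat.mod_eq_of_lt j.isLt)
    have e2 : tileIdx hp0 (⟨m - 1, Nat.sub_lt hm one_pos⟩ : Fin m) = i' := by
      apply Fin.ext
      show (m - 1) % p = i'.val
      rw [pred_mod hp hm hp0, hi']
    rw [e1, e2]
    exact congrArg cpB (hre i' j)

lemma pk_up (hp : p ∣ m) (hq : q ∣ n) (hm : 0 < m) (hn : 0 < n)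
    (hp0 : 0 < p) (hq0 : 0 < q) (hpm : p ≤ m) (hqn : q ≤ n)
    (hT : ∀ i j, M i j = K (tileIdx hp0 i) (tileIdx hq0 j))
    (hK : PeriodKnot K) : PeriodKnot M := by
  refine ⟨⟨?_, ?_⟩, ?_, ?_⟩
  · intro i j h
    rw [hT i j, hT i ⟨j.val + 1, h⟩]
    by_cases hc : j.val % q + 1 < q
    · have e : tileIdx hq0 (⟨j.val + 1, h⟩ : Fin n) = ⟨j.val % q + 1, hc⟩ := by
        apply Fin.ext
        show (j.val + 1) % q = j.val % q + 1
        conv_lhs => rw [← Nat.mod_add_mod]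
        exact Nat.mod_eq_of_lt hc
      rw [e]
      exact hK.1.1 (tileIdx hp0 i) (tileIdx hq0 j) hc
    · have hq1 : j.val % q = q - 1 := by have := Nat.mod_lt j.val hq0; omega
      have e : tileIdx hq0 (⟨j.val + 1, h⟩ : Fin n) = (⟨0, hq0⟩ : Fin q) := by
        apply Fin.ext
        show (j.val + 1) % q = 0
        conv_lhs => rw [← Nat.mod_add_mod]
        rw [hq1, show q - 1 + 1 = q by omega, Nat.mod_self]
      rw [e]
      exact (hK.2.1 (tileIdx hp0 i) ⟨0, hq0⟩ (tileIdx hq0 j) rfl hq1).symm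
  · intro i h j
    rw [hT i j, hT ⟨i.val + 1, h⟩ j]
    by_cases hc : i.val % p + 1 < p
    · have e : tileIdx hp0 (⟨i.val + 1, h⟩ : Fin m) = ⟨i.val % p + 1, hc⟩ := by
        apply Fin.ext
        show (i.val + 1) % p = i.val % p + 1
        conv_lhs => rw [← Nat.mod_add_mod]
        exact Nat.mod_eq_of_lt hc
      rw [e]
      exact hK.1.2 (tileIdx hp0 i) hc (tileIdx hq0 j)
    · have hp1 : i.val % p = p - 1 := by have := Nat.mod_lt i.val hp0; omega
      have e : tileIdx hp0 (⟨i.val + 1, h⟩ : Fin m) = (⟨0, hp0⟩ : Fin p) := by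
        apply Fin.ext
        show (i.val + 1) % p = 0
        conv_lhs => rw [← Nat.mod_add_mod]
        rw [hp1, show p - 1 + 1 = p by omega, Nat.mod_self]
      rw [e]
      exact (hK.2.2 ⟨0, hp0⟩ (tileIdx hp0 i) (tileIdx hq0 j) rfl hp1).symm
  · intro i j j' hj hj'
    rw [hT i j, hT i j']
    have e1 : tileIdx hq0 j = (⟨0, hq0⟩ : Fin q) := by
      apply Fin.ext
      show j.val % q = 0
      rw [hj]; exact Nat.zero_mod q
    have e2 : tileIdx hq0 j' = (⟨q - 1, by omega⟩ : Fin q) := by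
      apply Fin.ext
      show j'.val % q = q - 1
      rw [hj']; exact pred_mod hq hn hq0
    rw [e1, e2]
    exact hK.2.1 _ _ _ rfl rfl
  · intro i i' j hi hi'
    rw [hT i j, hT i' j]
    have e1 : tileIdx hp0 i = (⟨0, hp0⟩ : Fin p) := by
      apply Fin.ext
      show i.val % p = 0
      rw [hi]; exact Nat.zero_mod p
    have e2 : tileIdx hp0 i' = (⟨p - 1, by omega⟩ : Fin p) := by
      apply Fin.ext
      show i'.val % p = p - 1
      rw [hi']; exact pred_mod hp hm hp0
    rw [e1, e2]
    exact hK.2.2 _ _ _ rfl rfl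

end PK

end FPAux
open FPAux

/-- For `p ∣ m`, `q ∣ n`, `r ∣ p`, `s ∣ q`, the number of `(r,s)`-f.period knot
`(m,n)`-mosaics equals the number of `(r,s)`-f.period knot `(p,q)`-mosaics; indeed every
`(p,q)`-f.period knot `(m,n)`-mosaic is the tiling of the `m × n` array by copies of a
unique period knot `(p,q)`-mosaic. -/
theorem fperiod_count_stable (m n p q r s : ℕ) (hm : 0 < m) (hn : 0 < n)
    (hp : p ∣ m) (hq : q ∣ n) (hr : r ∣ p) (hs : s ∣ q) :
    dFP m n r s = dFP p q r s ∧
    ∀ M : Mosaic m n, PeriodKnot M → IsFPeriod p q M →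
      ∃! K : Mosaic p q, PeriodKnot K ∧ ∀ (i : Fin m) (j : Fin n),
        M i j = K ⟨i.val % p, Nat.mod_lt _ (Nat.pos_of_dvd_of_pos hp hm)⟩
                  ⟨j.val % q, Nat.mod_lt _ (Nat.pos_of_dvd_of_pos hq hn)⟩ := by
  have hp0 : 0 < p := Nat.pos_of_dvd_of_pos hp hm
  have hq0 : 0 < q := Nat.pos_of_dvd_of_pos hq hn
  have hpm : p ≤ m := Nat.le_of_dvd hm hp
  have hqn : q ≤ n := Nat.le_of_dvd hn hq
  constructor
  · let F : {K : Mosaic p q // PeriodKnot K ∧ IsFPeriod r s K} →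
        {M : Mosaic m n // PeriodKnot M ∧ IsFPeriod r s M} := fun K =>
      ⟨fun i j => K.1 (tileIdx hp0 i) (tileIdx hq0 j),
        pk_up hp hq hm hn hp0 hq0 hpm hqn (fun _ _ => rfl) K.2.1,
        (fper_iff hp hq hp0 hq0 hpm hqn (fun _ _ => rfl) r s).mpr K.2.2⟩
    have hinj : Function.Injective F := by
      intro K1 K2 h
      apply Subtype.ext
      funext i j
      have h2 := congrFun (congrFun (congrArg Subtype.val h)
        ⟨i.val, lt_of_lt_of_le i.isLt hpm⟩) ⟨j.val, lt_of_lt_of_le j.isLt hqn⟩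
      have e1 : tileIdx (m := m) hp0 ⟨i.val, lt_of_lt_of_le i.isLt hpm⟩ = i :=
        Fin.ext (Nat.mod_eq_of_lt i.isLt)
      have e2 : tileIdx (m := n) hq0 ⟨j.val, lt_of_lt_of_le j.isLt hqn⟩ = j :=
        Fin.ext (Nat.mod_eq_of_lt j.isLt)
      have h3 : K1.1 (tileIdx hp0 ⟨i.val, lt_of_lt_of_le i.isLt hpm⟩)
            (tileIdx hq0 ⟨j.val, lt_of_lt_of_le j.isLt hqn⟩)
          = K2.1 (tileIdx hp0 ⟨i.val, lt_of_lt_of_le i.isLt hpm⟩)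
            (tileIdx hq0 ⟨j.val, lt_of_lt_of_le j.isLt hqn⟩) := h2
      rw [e1, e2] at h3
      exact h3
    have hsurj : Function.Surjective F := by
      rintro ⟨M, hpk, hfp⟩
      obtain ⟨hr1, hMr⟩ := hfp.1.1
      obtain ⟨hs1, hMs⟩ := hfp.2.1
      have hMp : M = tshift (p:ℤ) 0 M := by
        have h := row_mul M r hMr (p / r)
        rwa [Nat.mul_div_cancel' hr] at h
      have hMq : M = tshift 0 (q:ℤ) M := by
        have h := col_mul M s hMs (q / s)
        rwa [Nat.mul_div_cancel' hs] at h
      have hT : ∀ i j, M i j =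
          (fun (i' : Fin p) (j' : Fin q) => M ⟨i'.val, lt_of_lt_of_le i'.isLt hpm⟩
            ⟨j'.val, lt_of_lt_of_le j'.isLt hqn⟩) (tileIdx hp0 i) (tileIdx hq0 j) :=
        fun i j => tiles_of_periodic hp0 hq0 hpm hqn M hMp hMq i j
      refine ⟨⟨fun i' j' => M ⟨i'.val, lt_of_lt_of_le i'.isLt hpm⟩
          ⟨j'.val, lt_of_lt_of_le j'.isLt hqn⟩,
        pk_down hp hq hm hn hp0 hq0 hpm hqn hT hpk,
        (fper_iff hp hq hp0 hq0 hpm hqn hT r s).mp hfp⟩, ?_⟩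
      apply Subtype.ext
      funext i j
      exact (hT i j).symm
    exact (Nat.card_congr (Equiv.ofBijective F ⟨hinj, hsurj⟩)).symm
  · intro M hpk hfp
    obtain ⟨hp1, hMp⟩ := hfp.1.1
    obtain ⟨hq1, hMq⟩ := hfp.2.1
    have hT : ∀ i j, M i j =
        (fun (i' : Fin p) (j' : Fin q) => M ⟨i'.val, lt_of_lt_of_le i'.isLt hpm⟩
          ⟨j'.val, lt_of_lt_of_le j'.isLt hqn⟩) (tileIdx hp0 i) (tileIdx hq0 j) :=
      fun i j => tiles_of_periodic hp0 hq0 hpm hqn M hMp hMq i j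
    refine ⟨fun i' j' => M ⟨i'.val, lt_of_lt_of_le i'.isLt hpm⟩
        ⟨j'.val, lt_of_lt_of_le j'.isLt hqn⟩,
      ⟨pk_down hp hq hm hn hp0 hq0 hpm hqn hT hpk, fun i j => hT i j⟩, ?_⟩
    rintro K' ⟨hK'pk, hK'T⟩
    funext i j
    have h := hK'T ⟨i.val, lt_of_lt_of_le i.isLt hpm⟩ ⟨j.val, lt_of_lt_of_le j.isLt hqn⟩
    have e1 : (⟨(⟨i.val, lt_of_lt_of_le i.isLt hpm⟩ : Fin m).val % p,
        Nat.mod_lt _ (Nat.pos_of_dvd_of_pos hp hm)⟩ : Fin p) = i :=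
      Fin.ext (Nat.mod_eq_of_lt i.isLt)
    have e2 : (⟨(⟨j.val, lt_of_lt_of_le j.isLt hqn⟩ : Fin n).val % q,
        Nat.mod_lt _ (Nat.pos_of_dvd_of_pos hq hn)⟩ : Fin q) = j :=
      Fin.ext (Nat.mod_eq_of_lt j.isLt)
    exact (h.trans (congrArg₂ K' e1 e2)).symm
end
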